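/- arXiv:2207.03974 — 9 statements merged into one kernel-verified Lean document; each statement's English description precedes it below -/
import Mathlib

section
/- Let D be a digraph on n vertices containing no transitive cycle TC_k for any k ≥ 3. Then the number of edges of D is at most ⌊n²/4⌋ + 2. -/
/-- The digraph with edge set `E` on vertex set `Fin n` contains the transitive cycle `TC_k`:
there is an injective map `φ` of `{0, …, k-1}` into the vertices with all edges
`φ i → φ (i+1)` for `i ∈ {0, …, k-2}` together with the edge `φ 0 → φ (k-1)`. -/
def ContainsTC (n k : ℕ) (E : Finset (Fin n × Fin n)) : Prop :=
  ∃ φ : ℕ → Fin n, Set.InjOn φ (Set.Iio k) ∧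
    (∀ i, i + 1 < k → (φ i, φ (i + 1)) ∈ E) ∧ (φ 0, φ (k - 1)) ∈ E

/-!
Call an edge internal if it lies inside a strong component and cross otherwise, and let `t` be
the number of strong components. In a `TC`-free digraph no edge `u → v` is bypassed by another
walk from `u` to `v`. Hence two strong components are joined by at most one edge, and the
condensation is acyclic without transitive triangles, so its underlying graph is triangle-free and
Mantel's theorem bounds the cross edges by `t² / 4`. The internal edges number at most
`2 (n - t)`: contracting a cycle to a vertex preserves `TC`-freeness and the strong components,
and a cycle of a `TC`-free digraph has no chords, while the remaining edges stay distinct after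
the contraction. Finally `2 (n - t) + t² / 4 ≤ n² / 4 + 2` for `1 ≤ t ≤ n`.
-/

open Relation

variable {V W : Type*}

def deleteEdge (R : V → V → Prop) (u v : V) : V → V → Prop :=
  fun x y => R x y ∧ (x, y) ≠ (u, v)

/-- A path `u = x₁ → ⋯ → x_k = v` with `k ≥ 3` together with the edge `u → v` is a copy of
`TC_k`; as walks shorten to paths, having none means that no edge `u → v` is bypassed by a walk
from `u` to `v` avoiding it. Taking `u = v` shows that this also excludes loops. -/
def TCFree (R : V → V → Prop) : Prop :=
  ∀ u v, R u v → ¬ ReflTransGen (deleteEdge R u v) u v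

lemma TCFree.irrefl {R : V → V → Prop} (hR : TCFree R) (u : V) : ¬ R u u :=
  fun h => hR u u h .refl

def IsWalk (R : V → V → Prop) (w : ℕ → V) (m : ℕ) : Prop :=
  ∀ k < m, R (w k) (w (k + 1))

lemma reflTransGen_of_forall_step {S : V → V → Prop} {w : ℕ → V} {a b : ℕ} (hab : a ≤ b)
    (h : ∀ k, a ≤ k → k < b → S (w k) (w (k + 1))) : ReflTransGen S (w a) (w b) := by
  induction b, hab using Nat.le_induction with
  | base => rfl
  | succ b hab ih =>
    exact (ih fun k hak hkb => h k hak (by omega)).tail (h b hab (by omega))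

namespace IsWalk

variable {R : V → V → Prop} {w : ℕ → V} {m : ℕ}

lemma exists_splice (hw : IsWalk R w m) {i j : ℕ} (hij : i < j) (hjm : j ≤ m)
    (he : w i = w j) :
    ∃ w' : ℕ → V, w' 0 = w 0 ∧ w' (m - (j - i)) = w m ∧ IsWalk R w' (m - (j - i)) := by
  refine ⟨fun k => if k ≤ i then w k else w (k + (j - i)), by simp, ?_, ?_⟩
  · simp only
    split_ifs with h
    · rw [show m - (j - i) = i by omega, he, show j = m by omega]
    · congr 1; omega
  · intro k hk
    simp only
    split_ifs with h1 h2 h2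
    · exact hw k (by omega)
    · obtain rfl : k = i := by omega
      rw [he, show k + 1 + (j - k) = j + 1 by omega]
      exact hw j (by omega)
    · omega
    · rw [show k + 1 + (j - i) = k + (j - i) + 1 by omega]
      exact hw _ (by omega)

end IsWalk

lemma exists_walk_of_reflTransGen {R : V → V → Prop} {u v : V} (h : ReflTransGen R u v) :
    ∃ (m : ℕ) (w : ℕ → V), w 0 = u ∧ w m = v ∧ IsWalk R w m := by
  induction h with
  | refl => exact ⟨0, fun _ => u, rfl, rfl, fun k hk => absurd hk k.not_lt_zero⟩
  | @tail b c _ hbc ih =>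
    obtain ⟨m, w, h0, hm, hw⟩ := ih
    refine ⟨m + 1, Function.update w (m + 1) c, by simp [h0], by simp, fun k hk => ?_⟩
    rcases Nat.lt_succ_iff_lt_or_eq.1 hk with hk | rfl
    · simpa [Function.update_of_ne (show k ≠ m + 1 by omega),
        Function.update_of_ne (show k + 1 ≠ m + 1 by omega)] using hw k hk
    · simpa [Function.update_of_ne (show k ≠ k + 1 by omega), hm] using hbc

lemma exists_path_of_reflTransGen {R : V → V → Prop} {u v : V} (h : ReflTransGen R u v) :
    ∃ (m : ℕ) (w : ℕ → V),
      w 0 = u ∧ w m = v ∧ IsWalk R w m ∧ Set.InjOn w (Set.Iio (m + 1)) := by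
  obtain ⟨m, w, h0, hm, hw⟩ := exists_walk_of_reflTransGen h
  induction m using Nat.strong_induction_on generalizing w with
  | _ m ih =>
    by_cases hinj : Set.InjOn w (Set.Iio (m + 1))
    · exact ⟨m, w, h0, hm, hw, hinj⟩
    have key : ∀ i j, i < j → j ≤ m → w i = w j → ∃ (m' : ℕ) (w' : ℕ → V),
        w' 0 = u ∧ w' m' = v ∧ IsWalk R w' m' ∧ Set.InjOn w' (Set.Iio (m' + 1)) := by
      intro i j hij hjm he
      obtain ⟨w', h0', hm', hw'⟩ := hw.exists_splice hij hjm he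
      exact ih _ (by omega) w' (h0'.trans h0) (hm'.trans hm) hw'
    simp only [Set.InjOn, Set.mem_Iio, not_forall] at hinj
    obtain ⟨i, hi, j, hj, he, hne⟩ := hinj
    rcases Nat.lt_or_gt_of_ne hne with hij | hji
    · exact key i j hij (by omega) he
    · exact key j i hji (by omega) he.symm

def contract (R : V → V → Prop) (f : V → W) : W → W → Prop :=
  fun x y => x ≠ y ∧ Relation.Map R f f x y

def FiberConnected (R : V → V → Prop) (f : V → W) : Prop :=
  ∀ ⦃u v⦄, f u = f v → ReflTransGen (fun x y => R x y ∧ f x = f y) u v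

section contract

variable {R : V → V → Prop} {f : V → W}

lemma reflTransGen_contract {u v : V} (h : ReflTransGen R u v) :
    ReflTransGen (contract R f) (f u) (f v) := by
  induction h with
  | refl => rfl
  | @tail b c _ hbc ih =>
    by_cases hfb : f b = f c
    · rwa [← hfb]
    · exact ih.tail ⟨hfb, b, c, hbc, rfl, rfl⟩

namespace FiberConnected

lemma reflTransGen_of_map (hf : FiberConnected R f) {x y : W}
    (h : ReflTransGen (Relation.Map R f f) x y) {u v : V} (hu : f u = x) (hv : f v = y) :
    ReflTransGen R u v := by
  induction h generalizing v with
  | refl => exact ReflTransGen.mono (fun _ _ h => h.1) _ _ (hf (hu.trans hv.symm))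
  | tail _ hzy ih =>
    obtain ⟨a, b, hab, rfl, rfl⟩ := hzy
    exact ((ih rfl).tail hab).trans (ReflTransGen.mono (fun _ _ h => h.1) _ _ (hf hv.symm))

lemma reflTransGen_contract_iff (hf : FiberConnected R f) {u v : V} :
    ReflTransGen (contract R f) (f u) (f v) ↔ ReflTransGen R u v :=
  ⟨fun h => hf.reflTransGen_of_map (ReflTransGen.mono (fun _ _ h => h.2) _ _ h) rfl rfl,
    reflTransGen_contract⟩

lemma deleteEdge (hf : FiberConnected R f) {u v : V} (huv : f u ≠ f v) :
    FiberConnected (deleteEdge R u v) f := fun _ _ h =>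
  ReflTransGen.mono (fun _ _ hxy => ⟨⟨hxy.1, by rintro ⟨rfl, rfl⟩; exact huv hxy.2⟩, hxy.2⟩) _ _
    (hf h)

end FiberConnected

namespace TCFree

lemma contract (hR : TCFree R) (hf : FiberConnected R f) : TCFree (contract R f) := by
  rintro _ _ ⟨hne, u, v, huv, rfl, rfl⟩ h
  refine hR u v huv ((hf.deleteEdge hne).reflTransGen_of_map (ReflTransGen.mono ?_ _ _ h) rfl rfl)
  rintro _ _ ⟨⟨hxy, a, b, hab, rfl, rfl⟩, hne'⟩
  exact ⟨a, b, ⟨hab, by rintro ⟨rfl, rfl⟩; exact hne' rfl⟩, rfl, rfl⟩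

/-- Two edges between the same pair of connected fibres would bypass each other. -/
lemma injOn_prodMap (hR : TCFree R) (hf : FiberConnected R f) :
    Set.InjOn (Prod.map f f) {e : V × V | R e.1 e.2 ∧ f e.1 ≠ f e.2} := by
  rintro ⟨u, v⟩ ⟨huv, hne⟩ ⟨u', v'⟩ ⟨huv', -⟩ he
  simp only [Prod.map, Prod.mk.injEq] at he hne
  by_contra hne'
  have hfd := hf.deleteEdge hne
  refine hR u v huv ((ReflTransGen.mono (fun _ _ h => h.1) _ _ (hfd he.1)).trans ?_)
  exact (ReflTransGen.mono (fun _ _ h => h.1) _ _ (hfd he.2.symm)).head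
    ⟨huv', fun h => hne' h.symm⟩

end TCFree

end contract

section components

variable {R : V → V → Prop}

def strongSetoid (R : V → V → Prop) : Setoid V where
  r u v := ReflTransGen R u v ∧ ReflTransGen R v u
  iseqv := ⟨fun _ => ⟨.refl, .refl⟩, fun h => ⟨h.2, h.1⟩,
    fun h h' => ⟨h.1.trans h'.1, h'.2.trans h.2⟩⟩

noncomputable def sccCount (R : V → V → Prop) : ℕ := Nat.card (Quotient (strongSetoid R))

def internalEdges (R : V → V → Prop) : Set (V × V) :=
  {e | R e.1 e.2 ∧ ReflTransGen R e.2 e.1}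

def crossEdges (R : V → V → Prop) : Set (V × V) :=
  {e | R e.1 e.2 ∧ ¬ ReflTransGen R e.2 e.1}

def condensation (R : V → V → Prop) :
    Quotient (strongSetoid R) → Quotient (strongSetoid R) → Prop :=
  contract R (Quotient.mk _)

lemma sccCount_le [Finite V] : sccCount R ≤ Nat.card V :=
  Nat.card_le_card_of_surjective _ Quotient.mk_surjective

lemma fiberConnected_mk : FiberConnected R (Quotient.mk (strongSetoid R)) := by
  intro u v h
  obtain ⟨huv, hvu⟩ := Quotient.eq.1 h
  clear h
  induction huv with
  | refl => rfl
  | @tail b c hub hbc ih =>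
    refine (ih ((ReflTransGen.single hbc).trans hvu)).tail ⟨hbc, Quotient.sound ?_⟩
    exact ⟨.single hbc, hvu.trans hub⟩

lemma sccCount_contract {f : V → W} (hf : FiberConnected R f) (hs : Function.Surjective f) :
    sccCount (contract R f) = sccCount R := by
  let g : V → Quotient (strongSetoid (contract R f)) := fun v => Quotient.mk _ (f v)
  have hker : Setoid.ker g = strongSetoid R := by
    ext u v
    rw [Setoid.ker_def, Quotient.eq]
    exact and_congr hf.reflTransGen_contract_iff hf.reflTransGen_contract_iff
  rw [sccCount, sccCount, ← hker]
  exact (Nat.card_congr (Setoid.quotientKerEquivOfSurjective g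
    (Quotient.mk_surjective.comp hs))).symm

lemma ncard_internalEdges_diff_le [Finite W] {f : V → W} (hR : TCFree R)
    (hf : FiberConnected R f) :
    (internalEdges R \ {e | f e.1 = f e.2}).ncard ≤ (internalEdges (contract R f)).ncard := by
  refine Set.ncard_le_ncard_of_injOn (Prod.map f f) ?_ ((hR.injOn_prodMap hf).mono ?_)
  · rintro ⟨u, v⟩ ⟨⟨huv, hvu⟩, hne⟩
    exact ⟨⟨hne, u, v, huv, rfl, rfl⟩, reflTransGen_contract hvu⟩
  · rintro ⟨u, v⟩ ⟨⟨huv, -⟩, hne⟩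
    exact ⟨huv, hne⟩

lemma condensation_acyclic {x y : Quotient (strongSetoid R)} (h : condensation R x y) :
    ¬ ReflTransGen (condensation R) y x := by
  obtain ⟨hne, u, v, huv, rfl, rfl⟩ := h
  intro hvu
  exact hne (Quotient.sound ⟨.single huv, fiberConnected_mk.reflTransGen_contract_iff.1 hvu⟩)

lemma ncard_crossEdges_le [Finite V] (hR : TCFree R) :
    (crossEdges R).ncard ≤ {e : _ × _ | condensation R e.1 e.2}.ncard := by
  refine Set.ncard_le_ncard_of_injOn (Prod.map (Quotient.mk _) (Quotient.mk _)) ?_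
    ((hR.injOn_prodMap fiberConnected_mk).mono ?_)
  · rintro ⟨u, v⟩ ⟨huv, hvu⟩
    exact ⟨fun h => hvu (Quotient.eq.1 h).2, u, v, huv, rfl, rfl⟩
  · rintro ⟨u, v⟩ ⟨huv, hvu⟩
    exact ⟨huv, fun h => hvu (Quotient.eq.1 h).2⟩

end components

/-- The underlying graph is triangle-free, so this is Mantel's theorem. -/
lemma TCFree.four_mul_ncard_le_sq [Finite W] {R : W → W → Prop} (hR : TCFree R)
    (hacyc : ∀ x y, R x y → ¬ ReflTransGen R y x) :
    4 * {e : W × W | R e.1 e.2}.ncard ≤ Nat.card W ^ 2 := by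
  classical
  have := Fintype.ofFinite W
  let G := SimpleGraph.fromRel R
  have htrans : ∀ {x y z}, R x y → R y z → R x z → False := fun hxy hyz hxz =>
    hR _ _ hxz ((ReflTransGen.single ⟨hxy, by rintro ⟨-, rfl⟩; exact hR.irrefl _ hyz⟩).tail
      ⟨hyz, by rintro ⟨rfl, -⟩; exact hR.irrefl _ hxy⟩)
  have hcyc : ∀ {x y z}, R x y → R y z → R z x → False := fun hxy hyz hzx =>
    hacyc _ _ hxy ((ReflTransGen.single hyz).tail hzx)
  have hG : G.CliqueFree 3 := by
    intro s hs
    obtain ⟨a, b, c, ⟨-, hab⟩, ⟨-, hac⟩, ⟨-, hbc⟩, -⟩ := SimpleGraph.is3Clique_iff.1 hs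
    rcases hab with hab | hab <;> rcases hac with hac | hac <;> rcases hbc with hbc | hbc <;>
      solve_by_elim
  have hcard : {e : W × W | R e.1 e.2}.ncard ≤ G.edgeFinset.card := by
    rw [← Set.ncard_coe_finset, SimpleGraph.coe_edgeFinset]
    refine Set.ncard_le_ncard_of_injOn (fun e => s(e.1, e.2)) ?_ ?_
    · rintro ⟨u, v⟩ (huv : R u v)
      exact (SimpleGraph.mem_edgeSet G).2
        ((SimpleGraph.fromRel_adj R u v).2 ⟨by rintro rfl; exact hR.irrefl u huv, Or.inl huv⟩)
    · rintro ⟨u, v⟩ huv ⟨u', v'⟩ huv' he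
      rcases Sym2.eq_iff.1 he with ⟨rfl, rfl⟩ | ⟨rfl, rfl⟩
      · rfl
      · exact (hacyc _ _ huv (.single huv')).elim
  have hmantel := hG.card_edgeFinset_le (r := 2)
  have : (Fintype.card W % 2).choose 2 = 0 := Nat.choose_eq_zero_of_lt (by omega)
  rw [← Nat.card_eq_fintype_card] at *
  omega

section cycle

def StronglyConnectedOn (R : V → V → Prop) (C : Finset V) : Prop :=
  ∀ u ∈ C, ∀ v ∈ C, ReflTransGen (fun x y => R x y ∧ x ∈ C ∧ y ∈ C) u v

variable {R : V → V → Prop} {w : ℕ → V} {m : ℕ}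

lemma IsWalk.reflTransGen_of_closed {S : V → V → Prop} (hw : IsWalk S w m) (hc : S (w m) (w 0))
    {i j : ℕ} (hi : i ≤ m) (hj : j ≤ m) : ReflTransGen S (w i) (w j) :=
  ((reflTransGen_of_forall_step hi fun k _ hk => hw k hk).tail hc).trans
    (reflTransGen_of_forall_step j.zero_le fun k _ hk => hw k (by omega))

/-- A chord of the cycle would be bypassed by the arc of the cycle it spans. -/
lemma TCFree.eq_succ_of_cycle (hR : TCFree R) (hw : IsWalk R w m) (hc : R (w m) (w 0))
    (hinj : Set.InjOn w (Set.Iio (m + 1))) {i j : ℕ} (hi : i ≤ m) (hj : j ≤ m)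
    (hij : R (w i) (w j)) : j = i + 1 ∨ (i = m ∧ j = 0) := by
  by_contra hne
  have heq : ∀ {k l}, k ≤ m → l ≤ m → w k = w l → k = l := fun hk hl h =>
    hinj (Set.mem_Iio.2 (by omega)) (Set.mem_Iio.2 (by omega)) h
  have hstep : ∀ k < m, ¬ (k = i ∧ k + 1 = j) →
      deleteEdge R (w i) (w j) (w k) (w (k + 1)) := fun k hk hkij =>
    ⟨hw k hk, fun h => hkij ⟨heq (by omega) hi (Prod.mk.inj h).1,
      heq (by omega) hj (Prod.mk.inj h).2⟩⟩
  refine hR _ _ hij ?_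
  rcases Nat.lt_or_ge i j with hlt | hge
  · exact reflTransGen_of_forall_step hlt.le fun k hik hkj => hstep k (by omega) (by omega)
  · refine ((reflTransGen_of_forall_step hi fun k hik hkm => hstep k hkm (by omega)).tail
      ⟨hc, fun h => hne (Or.inr ⟨heq hi (by omega) (Prod.mk.inj h).1.symm,
        heq (by omega) hj (Prod.mk.inj h).2 |>.symm⟩)⟩).trans ?_
    exact reflTransGen_of_forall_step j.zero_le fun k _ hkj => hstep k (by omega) (by omega)

variable [DecidableEq V]

lemma TCFree.ncard_edges_cycle_le (hR : TCFree R) (hw : IsWalk R w m) (hc : R (w m) (w 0))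
    (hinj : Set.InjOn w (Set.Iio (m + 1))) :
    {e : V × V | R e.1 e.2 ∧ e.1 ∈ (Finset.range (m + 1)).image w ∧
      e.2 ∈ (Finset.range (m + 1)).image w}.ncard ≤ m + 1 := by
  calc _ ≤ (((Finset.range (m + 1)).image w : Finset V) : Set V).ncard := by
        refine Set.ncard_le_ncard_of_injOn Prod.fst (fun e he => he.2.1) ?_
        rintro ⟨_, _⟩ ⟨he, hu, hv⟩ ⟨_, _⟩ ⟨he', hu', hv'⟩ (rfl : _ = _)
        simp only [Finset.mem_image, Finset.mem_range] at hu hv hu' hv'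
        obtain ⟨i, hi, rfl⟩ := hu
        obtain ⟨j, hj, rfl⟩ := hv
        obtain ⟨j', hj', rfl⟩ := hv'
        have h1 := hR.eq_succ_of_cycle hw hc hinj (by omega) (by omega) he
        have h2 := hR.eq_succ_of_cycle hw hc hinj (by omega) (by omega) he'
        rw [show j = j' by omega]
    _ ≤ m + 1 := by
        rw [Set.ncard_coe_finset]
        exact Finset.card_image_le.trans (Finset.card_range _).le

lemma TCFree.exists_cycle (hR : TCFree R) {p q : V} (hpq : R p q) (hqp : ReflTransGen R q p) :
    ∃ C : Finset V, 2 ≤ C.card ∧ StronglyConnectedOn R C ∧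
      {e : V × V | R e.1 e.2 ∧ e.1 ∈ C ∧ e.2 ∈ C}.ncard ≤ C.card := by
  obtain ⟨m, w, h0, hm, hw, hinj⟩ := exists_path_of_reflTransGen hqp
  have hc : R (w m) (w 0) := h0 ▸ hm ▸ hpq
  have hm0 : m ≠ 0 := by rintro rfl; exact hR.irrefl _ hc
  set C := (Finset.range (m + 1)).image w
  have hcard : C.card = m + 1 := by
    rw [Finset.card_image_of_injOn (by rwa [Finset.coe_range]), Finset.card_range]
  have hmem : ∀ k ≤ m, w k ∈ C := fun k hk =>
    Finset.mem_image_of_mem w (Finset.mem_range.2 (Nat.lt_succ_of_le hk))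
  refine ⟨C, by omega, ?_, hcard ▸ hR.ncard_edges_cycle_le hw hc hinj⟩
  intro u hu v hv
  obtain ⟨i, hi, rfl⟩ := Finset.mem_image.1 hu
  obtain ⟨j, hj, rfl⟩ := Finset.mem_image.1 hv
  rw [Finset.mem_range] at hi hj
  exact IsWalk.reflTransGen_of_closed (fun k hk => ⟨hw k hk, hmem k hk.le, hmem (k + 1) hk⟩)
    ⟨hc, hmem m le_rfl, hmem 0 m.zero_le⟩ (by omega) (by omega)

end cycle

section collapse

variable [DecidableEq V] {R : V → V → Prop} {C : Finset V} {b : V}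

def collapse (C : Finset V) (b : V) (x : V) : ((C.erase b : Set V)ᶜ : Set V) :=
  if hx : x ∈ C then ⟨b, by simp⟩ else ⟨x, by simp [hx]⟩

lemma collapse_eq_collapse_iff (hb : b ∈ C) {x y : V} :
    collapse C b x = collapse C b y ↔ x = y ∨ (x ∈ C ∧ y ∈ C) := by
  unfold collapse
  split_ifs with hx hy hy <;> simp only [Subtype.mk.injEq] <;> grind

lemma collapse_surjective : Function.Surjective (collapse C b) := by
  rintro ⟨x, hx⟩
  refine ⟨x, ?_⟩
  unfold collapse
  split_ifs with h
  · simp only [Set.mem_compl_iff, Finset.coe_erase, Set.mem_sdiff, Finset.mem_coe, h,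
      Set.mem_singleton_iff, true_and, not_not] at hx
    simp [hx]
  · rfl

lemma nat_card_compl_erase_add [Finite V] (hb : b ∈ C) :
    Nat.card ((C.erase b : Set V)ᶜ : Set V) + (C.card - 1) = Nat.card V := by
  rw [Nat.card_coe_set_eq, ← Finset.card_erase_of_mem hb, ← Set.ncard_coe_finset, add_comm]
  exact Set.ncard_add_ncard_compl _

lemma fiberConnected_collapse (hb : b ∈ C) (hC : StronglyConnectedOn R C) :
    FiberConnected R (collapse C b) := by
  intro u v h
  rcases (collapse_eq_collapse_iff hb).1 h with rfl | ⟨hu, hv⟩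
  · rfl
  · exact ReflTransGen.mono (fun _ _ h => ⟨h.1, (collapse_eq_collapse_iff hb).2 (Or.inr h.2)⟩)
      _ _ (hC u hu v hv)

lemma ncard_internalEdges_le_collapse [Finite V] (hR : TCFree R) (hb : b ∈ C)
    (hC : StronglyConnectedOn R C) :
    (internalEdges R).ncard ≤ {e : V × V | R e.1 e.2 ∧ e.1 ∈ C ∧ e.2 ∈ C}.ncard +
      (internalEdges (contract R (collapse C b))).ncard := by
  rw [← Set.ncard_inter_add_ncard_sdiff_eq_ncard _ {e | collapse C b e.1 = collapse C b e.2}]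
  refine add_le_add (Set.ncard_le_ncard ?_ (Set.toFinite _))
    (ncard_internalEdges_diff_le hR (fiberConnected_collapse hb hC))
  rintro ⟨u, v⟩ ⟨⟨huv : R u v, -⟩, he : collapse C b u = collapse C b v⟩
  rcases (collapse_eq_collapse_iff hb).1 he with rfl | hC
  · exact absurd huv (hR.irrefl u)
  · exact ⟨huv, hC⟩

end collapse

/-- Induction on the number of vertices: contracting a cycle with `L ≥ 2` vertices keeps the
strong components and removes `L - 1` vertices and at most `L` internal edges. -/
theorem TCFree.ncard_internalEdges_add_two_mul_sccCount_le [Finite V] {R : V → V → Prop}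
    (hR : TCFree R) : (internalEdges R).ncard + 2 * sccCount R ≤ 2 * Nat.card V := by
  classical
  induction hn : Nat.card V using Nat.strong_induction_on generalizing V with
  | _ n ih =>
  by_cases hempty : internalEdges R = ∅
  · rw [hempty, Set.ncard_empty, ← hn]
    have := sccCount_le (R := R)
    omega
  obtain ⟨⟨p, q⟩, hpq, hqp⟩ := Set.nonempty_iff_ne_empty.2 hempty
  obtain ⟨C, hC2, hC, hCedges⟩ := hR.exists_cycle hpq hqp
  obtain ⟨b, hb⟩ := Finset.card_pos.1 (by omega : 0 < C.card)
  have hcard := nat_card_compl_erase_add hb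
  have hf := fiberConnected_collapse hb hC
  have hW := ih _ (by omega) (hR.contract hf) rfl
  rw [sccCount_contract hf collapse_surjective] at hW
  have := ncard_internalEdges_le_collapse hR hb hC
  omega

lemma tcFree_of_forall_not_containsTC {n : ℕ} {E : Finset (Fin n × Fin n)}
    (hirr : ∀ e ∈ E, e.1 ≠ e.2) (hfree : ∀ k, 3 ≤ k → ¬ ContainsTC n k E) :
    TCFree fun u v => (u, v) ∈ E := by
  intro u v huv h
  obtain ⟨m, w, h0, hm, hw, hinj⟩ := exists_path_of_reflTransGen h
  have hm2 : 2 ≤ m := by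
    rcases m with _ | _ | m
    · exact absurd (h0.symm.trans hm) (hirr _ huv)
    · exact absurd (by rw [← h0, ← hm]) (hw 0 one_pos).2
    · omega
  refine hfree (m + 1) (by omega) ⟨w, hinj, fun i hi => (hw i (by omega)).1, ?_⟩
  simpa [h0, hm] using huv

/-- `8n - 8t + t²` is convex in `t`, so on `1 ≤ t ≤ n` it is largest at `t = 1` or `t = n`. -/
lemma add_le_sq_div_four_add_two {i c t n : ℕ} (hi : i + 2 * t ≤ 2 * n) (hc : 4 * c ≤ t ^ 2)
    (ht : 0 < t) (htn : t ≤ n) : i + c ≤ n ^ 2 / 4 + 2 := by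
  rcases le_or_gt 7 n with hn | hn
  · have : t ^ 2 + n ≤ (n + 1) * t := by nlinarith
    have : 4 * (i + c) ≤ n ^ 2 := by nlinarith
    omega
  · interval_cases n <;> interval_cases t <;> omega

/-- A digraph on `n` vertices containing no transitive cycle `TC_k` for any `k ≥ 3`
has at most `⌊n²/4⌋ + 2` edges. -/
theorem tc_free_edge_bound (n : ℕ) (E : Finset (Fin n × Fin n))
    (hirr : ∀ e ∈ E, e.1 ≠ e.2)
    (hfree : ∀ k, 3 ≤ k → ¬ ContainsTC n k E) :
    E.card ≤ n ^ 2 / 4 + 2 := by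
  rcases Nat.eq_zero_or_pos n with rfl | hn
  · simp [Finset.eq_empty_of_isEmpty E]
  set R : Fin n → Fin n → Prop := fun u v => (u, v) ∈ E
  have hR : TCFree R := tcFree_of_forall_not_containsTC hirr hfree
  have hE : E.card = (internalEdges R).ncard + (crossEdges R).ncard := by
    rw [← Set.ncard_coe_finset,
      ← Set.ncard_inter_add_ncard_sdiff_eq_ncard _ {e : _ × _ | ReflTransGen R e.2 e.1}]
    rfl
  have hint := hR.ncard_internalEdges_add_two_mul_sccCount_le
  have hcross := Nat.mul_le_mul_left 4 (ncard_crossEdges_le hR) |>.trans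
    ((hR.contract fiberConnected_mk).four_mul_ncard_le_sq fun _ _ => condensation_acyclic)
  have : Nonempty (Quotient (strongSetoid R)) := ⟨Quotient.mk _ ⟨0, hn⟩⟩
  have htn := sccCount_le (R := R)
  rw [Nat.card_fin] at hint htn
  rw [hE]
  exact add_le_sq_div_four_add_two hint hcross Nat.card_pos htn
end

section
/- Let F be a family of subsets of [n] = {1,...,n}. If for every i ∈ [n] there exist sets A, B ∈ F with A \ B = {i}, then |F| ≥ 2√(n-2). -/
/-!
For `i ∈ [n]` pick `A i, B i ∈ F` with `A i \ B i = {i}` and view `i` as an arc `A i → B i` on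
the vertex set `F`. A walk avoiding the arc `i` never loses the element `i`, so it cannot lead
from `A i` to `B i`: every arc is the only walk from its tail to its head.

Inside a strong component with `c` vertices, every arc therefore lies in the union of an
out-branching and an in-branching at a fixed root, so there are at most `2 (c - 1)` such arcs.
Arcs between components join distinct pairs of components, and the graph they span on the `k`
components is triangle-free: a directed path `x → y → z` together with an arc between `x` and
`z` either closes a cycle of components or is a second walk along the arc `x → z`. By Mantel
there are at most `k² / 4` such arcs, so `n ≤ 2 (|F| - k) + k² / 4 ≤ |F|² / 4 + 2`.
-/

open Finset Relation

variable {ι V : Type*}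

def ArcReach (src tgt : ι → V) (M : Finset ι) : V → V → Prop :=
  ReflTransGen fun u v => ∃ i ∈ M, src i = u ∧ tgt i = v

namespace ArcReach

variable {src tgt : ι → V} {M M' : Finset ι} {u v : V}

lemma arc {i : ι} (hi : i ∈ M) : ArcReach src tgt M (src i) (tgt i) :=
  ReflTransGen.single ⟨i, hi, rfl, rfl⟩

lemma mono (hM : M ⊆ M') (h : ArcReach src tgt M u v) : ArcReach src tgt M' u v :=
  ReflTransGen.mono (fun _ _ ⟨i, hi, hs, ht⟩ => ⟨i, hM hi, hs, ht⟩) _ _ h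

lemma map {W : Type*} (f : V → W) (h : ArcReach src tgt M u v) :
    ArcReach (f ∘ src) (f ∘ tgt) M (f u) (f v) :=
  ReflTransGen.lift f
    (fun _ _ ⟨i, hi, hs, ht⟩ => ⟨i, hi, congrArg f hs, congrArg f ht⟩) _ _ h

lemma swap_iff : ArcReach tgt src M u v ↔ ArcReach src tgt M v u := by
  have : (fun u v => ∃ i ∈ M, tgt i = u ∧ src i = v) =
      Function.swap fun u v => ∃ i ∈ M, src i = u ∧ tgt i = v := by
    simp only [and_comm]
  rw [ArcReach, this, reflTransGen_swap, ArcReach]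

lemma erase_or_through [DecidableEq ι] (i : ι) (h : ArcReach src tgt M u v) :
    ArcReach src tgt (M.erase i) u v ∨
      ArcReach src tgt (M.erase i) u (src i) ∧ ArcReach src tgt (M.erase i) (tgt i) v := by
  induction h with
  | refl => exact .inl .refl
  | tail _ hstep ih =>
    obtain ⟨j, hj, rfl, rfl⟩ := hstep
    by_cases hji : j = i
    · subst hji
      exact .inr ⟨ih.elim id And.left, .refl⟩
    · have hj' : ∃ k ∈ M.erase i, src k = src j ∧ tgt k = tgt j :=
        ⟨j, mem_erase.2 ⟨hji, hj⟩, rfl, rfl⟩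
      exact ih.imp (·.tail hj') (And.imp_right (·.tail hj'))

lemma exists_arc_leaving {S : Set V} (hu : u ∈ S) (hv : v ∉ S) (h : ArcReach src tgt M u v) :
    ∃ i ∈ M, src i ∈ S ∧ tgt i ∉ S ∧ ArcReach src tgt M (tgt i) v := by
  induction h using ReflTransGen.head_induction_on with
  | refl => exact absurd hu hv
  | head hstep hrest ih =>
    obtain ⟨i, hi, rfl, rfl⟩ := hstep
    by_cases hS : tgt i ∈ S
    · exact ih hS
    · exact ⟨i, hi, hu, hS, hrest⟩

/-- Grow a set `S ∋ r` reached from `r` through fewer than `#S` arcs until it is all of `C`: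
a walk from `r` to a missing vertex leaves `S` along an arc whose head still lies in `C`. -/
lemma exists_out_branching {C : Finset V} {r : V} (hr : r ∈ C)
    (hreach : ∀ v ∈ C, ArcReach src tgt M r v)
    (hconv : ∀ w, ∀ v ∈ C, ArcReach src tgt M r w → ArcReach src tgt M w v → w ∈ C) :
    ∃ T ⊆ M, #T < #C ∧ ∀ v ∈ C, ArcReach src tgt T r v := by
  classical
  let good : Finset (Finset V) := C.powerset.filter fun S =>
    r ∈ S ∧ ∃ T ⊆ M, #T < #S ∧ ∀ v ∈ S, ArcReach src tgt T r v
  have hsingleton : {r} ∈ good := mem_filter.2 ⟨by simpa using hr, mem_singleton_self r,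
    ∅, empty_subset M, by simp, fun v hv => mem_singleton.1 hv ▸ .refl⟩
  obtain ⟨S, hS, hmax⟩ := good.exists_max_image card ⟨_, hsingleton⟩
  obtain ⟨hSC, hrS, T, hTM, hTS, hTreach⟩ := mem_filter.1 hS
  refine ⟨T, hTM, hTS.trans_le (card_le_card (mem_powerset.1 hSC)), fun v hv => ?_⟩
  by_contra hvT
  have hvS : v ∉ S := fun hvS => hvT (hTreach v hvS)
  obtain ⟨i, hi, hsrc, htgt, hrest⟩ :=
    exists_arc_leaving (S := (S : Set V)) hrS hvS (hreach v hv)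
  have hreach_tgt : ArcReach src tgt (insert i T) r (tgt i) :=
    ((hTreach _ hsrc).mono (subset_insert i T)).tail ⟨i, mem_insert_self i T, rfl, rfl⟩
  have hgood : insert (tgt i) S ∈ good := by
    refine mem_filter.2 ⟨mem_powerset.2 (insert_subset ?_ (mem_powerset.1 hSC)),
      mem_insert_of_mem hrS, insert i T, insert_subset hi hTM, ?_, ?_⟩
    · exact hconv _ v hv (hreach_tgt.mono (insert_subset hi hTM)) hrest
    · rw [card_insert_of_notMem htgt]
      exact (card_insert_le i T).trans_lt (Nat.add_lt_add_right hTS 1)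
    · intro w hw
      rcases mem_insert.1 hw with rfl | hw
      · exact hreach_tgt
      · exact (hTreach w hw).mono (subset_insert i T)
  have := hmax _ hgood
  rw [card_insert_of_notMem htgt] at this
  omega

end ArcReach

theorem SimpleGraph.CliqueFree.four_mul_card_edgeFinset_le {W : Type*} [Fintype W]
    {G : SimpleGraph W} [DecidableRel G.Adj] (h : G.CliqueFree 3) :
    4 * #G.edgeFinset ≤ Fintype.card W ^ 2 := by
  have := h.card_edgeFinset_le (r := 2)
  dsimp only at this
  rw [Nat.choose_eq_zero_of_lt (Nat.mod_lt _ two_pos), Nat.add_one_sub_one, mul_one,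
    add_zero] at this
  calc 4 * #G.edgeFinset
      ≤ 4 * ((Fintype.card W ^ 2 - (Fintype.card W % 2) ^ 2) / (2 * 2)) := by gcongr
    _ ≤ _ := (Nat.mul_div_le _ _).trans (Nat.sub_le _ _)

/-- Every orientation of a triangle contains a directed path `x → y → z`. -/
theorem SimpleGraph.cliqueFree_three_fromRel {W : Type*} {r : W → W → Prop}
    (h : ∀ x y z, x ≠ y → y ≠ z → x ≠ z → r x y → r y z → ¬ r x z ∧ ¬ r z x) :
    (SimpleGraph.fromRel r).CliqueFree 3 := by
  classical
  intro s hs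
  obtain ⟨a, b, c, hab, hac, hbc, -⟩ := SimpleGraph.is3Clique_iff.1 hs
  simp only [SimpleGraph.fromRel_adj] at hab hac hbc
  have := h a b c; have := h a c b; have := h b a c; have := h b c a; have := h c a b
  have := h c b a
  grind

lemma four_mul_add_le_sq_add_eight {a b k m : ℕ} (hk : 1 ≤ k) (hkm : k ≤ m)
    (ha : a + 2 * k ≤ 2 * m) (hb : 4 * b ≤ k ^ 2) : 4 * (a + b) ≤ m ^ 2 + 8 := by
  rcases le_total k 4 with hk4 | hk4
  · interval_cases k
    · obtain rfl : b = 0 := by omega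
      nlinarith [sq_nonneg ((m : ℤ) - 4)]
    all_goals nlinarith [sq_nonneg ((m : ℤ) - 4)]
  · nlinarith

section Condensation

variable [Fintype ι] (src tgt : ι → V)

def reachSetoid : Setoid V where
  r u v := ArcReach src tgt univ u v ∧ ArcReach src tgt univ v u
  iseqv := ⟨fun _ => ⟨.refl, .refl⟩, fun h => ⟨h.2, h.1⟩,
    fun h₁ h₂ => ⟨h₁.1.trans h₂.1, h₂.2.trans h₁.2⟩⟩

abbrev Scc : Type _ := Quotient (reachSetoid src tgt)

abbrev scc (v : V) : Scc src tgt := Quotient.mk _ v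

def SccArc (M : Finset ι) (c d : Scc src tgt) : Prop :=
  ∃ i ∈ M, scc src tgt (src i) = c ∧ scc src tgt (tgt i) = d

def ArcsEssential [DecidableEq ι] : Prop :=
  ∀ i, ¬ ArcReach src tgt (univ.erase i) (src i) (tgt i)

variable {src tgt}

lemma scc_eq_iff {u v : V} :
    scc src tgt u = scc src tgt v ↔ ArcReach src tgt univ u v ∧ ArcReach src tgt univ v u :=
  Quotient.eq

lemma arcReach_of_sccReach {M : Finset ι}
    (hM : ∀ u v, scc src tgt u = scc src tgt v → ArcReach src tgt M u v) {u v : V}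
    (h : ReflTransGen (SccArc src tgt M) (scc src tgt u) (scc src tgt v)) :
    ArcReach src tgt M u v := by
  suffices ∀ c, ReflTransGen (SccArc src tgt M) (scc src tgt u) c →
      ∀ v, scc src tgt v = c → ArcReach src tgt M u v from this _ h v rfl
  intro c hc
  induction hc with
  | refl => exact fun v hv => hM u v hv.symm
  | tail _ harc ih =>
    obtain ⟨i, hi, hs, rfl⟩ := harc
    exact fun v hv => ((ih _ hs).tail ⟨i, hi, rfl, rfl⟩).trans (hM _ _ hv.symm)

lemma sccReach_antisymm {c d : Scc src tgt} (hcd : ReflTransGen (SccArc src tgt univ) c d)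
    (hdc : ReflTransGen (SccArc src tgt univ) d c) : c = d := by
  induction c using Quotient.ind
  induction d using Quotient.ind
  have hM : ∀ u v, scc src tgt u = scc src tgt v → ArcReach src tgt univ u v :=
    fun _ _ h => (scc_eq_iff.1 h).1
  exact scc_eq_iff.2 ⟨arcReach_of_sccReach hM hcd, arcReach_of_sccReach hM hdc⟩

variable [DecidableEq ι]

lemma arcReach_erase_of_scc_eq {i : ι} (hi : scc src tgt (src i) ≠ scc src tgt (tgt i))
    {u v : V} (h : scc src tgt u = scc src tgt v) : ArcReach src tgt (univ.erase i) u v := by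
  obtain ⟨huv, hvu⟩ := scc_eq_iff.1 h
  refine (huv.erase_or_through i).resolve_right fun ⟨hu, hv⟩ =>
    hi (scc_eq_iff.2 ⟨.arc (mem_univ i), ?_⟩)
  exact ((hv.mono (erase_subset i univ)).trans hvu).trans (hu.mono (erase_subset i univ))

namespace ArcsEssential

variable (h : ArcsEssential src tgt)
include h

open scoped Classical

lemma not_sccReach_erase {i : ι} (hi : scc src tgt (src i) ≠ scc src tgt (tgt i)) :
    ¬ ReflTransGen (SccArc src tgt (univ.erase i)) (scc src tgt (src i)) (scc src tgt (tgt i)) :=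
  fun hc => h i (arcReach_of_sccReach (fun _ _ => arcReach_erase_of_scc_eq hi) hc)

lemma not_sccArc_of_sccArc_sccArc {x y z : Scc src tgt} (hxy : x ≠ y) (hyz : y ≠ z)
    (hxz : x ≠ z) (hxy' : SccArc src tgt univ x y) (hyz' : SccArc src tgt univ y z) :
    ¬ SccArc src tgt univ x z ∧ ¬ SccArc src tgt univ z x := by
  refine ⟨?_, fun hzx => hxz (sccReach_antisymm (.tail (.single hxy') hyz') (.single hzx))⟩
  rintro ⟨i, -, rfl, rfl⟩
  obtain ⟨j, -, hj, rfl⟩ := hxy'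
  obtain ⟨k, -, hk', hk⟩ := hyz'
  have hji : j ≠ i := by rintro rfl; exact hyz rfl
  have hki : k ≠ i := by rintro rfl; exact hxy hk'
  exact h.not_sccReach_erase hxz <|
    .tail (.single ⟨j, mem_erase.2 ⟨hji, mem_univ j⟩, hj, rfl⟩)
      ⟨k, mem_erase.2 ⟨hki, mem_univ k⟩, hk', hk⟩

lemma four_mul_card_cross_le [Fintype V] :
    4 * #{i | scc src tgt (src i) ≠ scc src tgt (tgt i)} ≤ Fintype.card (Scc src tgt) ^ 2 := by
  have hG : (SimpleGraph.fromRel (SccArc src tgt univ)).CliqueFree 3 :=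
    SimpleGraph.cliqueFree_three_fromRel fun _ _ _ => h.not_sccArc_of_sccArc_sccArc
  refine le_trans ?_ hG.four_mul_card_edgeFinset_le
  gcongr
  refine card_le_card_of_injOn (fun i => s(scc src tgt (src i), scc src tgt (tgt i))) ?_ ?_
  · intro i hi
    rw [mem_coe, SimpleGraph.mem_edgeFinset, SimpleGraph.mem_edgeSet, SimpleGraph.fromRel_adj]
    exact ⟨(mem_filter.1 hi).2, .inl ⟨i, mem_univ i, rfl, rfl⟩⟩
  · intro i hi j _ hij
    replace hi := (mem_filter.1 (mem_coe.1 hi)).2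
    rcases Sym2.eq_iff.1 hij with ⟨hs, ht⟩ | ⟨hs, ht⟩
    · by_contra hji
      exact h.not_sccReach_erase hi
        (.single ⟨j, mem_erase.2 ⟨Ne.symm hji, mem_univ j⟩, hs.symm, ht.symm⟩)
    · exact absurd (sccReach_antisymm (.single ⟨i, mem_univ i, rfl, rfl⟩)
        (.single ⟨j, mem_univ j, ht.symm, hs.symm⟩)) hi

lemma card_inner_add_two_le [Fintype V] (c : Scc src tgt) :
    #{i | scc src tgt (src i) = c ∧ scc src tgt (tgt i) = c} + 2 ≤
      2 * #{v | scc src tgt v = c} := by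
  obtain ⟨r, rfl⟩ : ∃ r, scc src tgt r = c := ⟨c.out, c.out_eq⟩
  set C : Finset V := {v | scc src tgt v = scc src tgt r}
  have hmem {v : V} : v ∈ C ↔ ArcReach src tgt univ v r ∧ ArcReach src tgt univ r v := by
    simp [C, scc_eq_iff]
  have hr : r ∈ C := hmem.2 ⟨.refl, .refl⟩
  obtain ⟨Tout, -, hTout, hout⟩ := ArcReach.exists_out_branching (M := univ) hr
    (fun v hv => (hmem.1 hv).2) (fun w v hv hrw hwv => hmem.2 ⟨hwv.trans (hmem.1 hv).1, hrw⟩)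
  obtain ⟨Tin, -, hTin, hin⟩ :=
    ArcReach.exists_out_branching (src := tgt) (tgt := src) (M := univ) hr
      (fun v hv => ArcReach.swap_iff.2 (hmem.1 hv).1)
      (fun w v hv hrw hwv => hmem.2 ⟨ArcReach.swap_iff.1 hrw,
        (hmem.1 hv).2.trans (ArcReach.swap_iff.1 hwv)⟩)
  have hsub : ({i | scc src tgt (src i) = scc src tgt r ∧ scc src tgt (tgt i) = scc src tgt r} :
      Finset ι) ⊆ Tout ∪ Tin := by
    intro i hi
    simp only [mem_filter, mem_univ, true_and] at hi
    by_contra hnot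
    rw [mem_union, not_or] at hnot
    have hout_sub : Tout ⊆ univ.erase i :=
      fun j hj => mem_erase.2 ⟨fun hji => hnot.1 (hji ▸ hj), mem_univ j⟩
    have hin_sub : Tin ⊆ univ.erase i :=
      fun j hj => mem_erase.2 ⟨fun hji => hnot.2 (hji ▸ hj), mem_univ j⟩
    exact h i (((ArcReach.swap_iff.1 (hin (src i) (by simp [C, hi.1]))).mono hin_sub).trans
      ((hout (tgt i) (by simp [C, hi.2])).mono hout_sub))
  have := card_le_card hsub
  have := card_union_le Tout Tin
  omega

lemma card_inner_add_le [Fintype V] :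
    #{i | scc src tgt (src i) = scc src tgt (tgt i)} + 2 * Fintype.card (Scc src tgt) ≤
      2 * Fintype.card V := by
  have hinner : #{i | scc src tgt (src i) = scc src tgt (tgt i)} =
      ∑ c, #{i | scc src tgt (src i) = c ∧ scc src tgt (tgt i) = c} := by
    rw [card_eq_sum_card_fiberwise (f := fun i => scc src tgt (src i)) (t := univ)
      (fun _ _ => mem_univ _)]
    refine sum_congr rfl fun c _ => ?_
    rw [filter_filter]
    congr 1
    grind
  have hV : Fintype.card V = ∑ c, #{v | scc src tgt v = c} := by
    rw [← card_univ, card_eq_sum_card_fiberwise (f := scc src tgt) (t := univ)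
      (fun _ _ => mem_univ _)]
  calc _ = ∑ c, (#{i | scc src tgt (src i) = c ∧ scc src tgt (tgt i) = c} + 2) := by
        rw [hinner, sum_add_distrib, sum_const, card_univ, smul_eq_mul, mul_comm]
    _ ≤ ∑ c, 2 * #{v | scc src tgt v = c} := sum_le_sum fun c _ => h.card_inner_add_two_le c
    _ = 2 * Fintype.card V := by rw [← mul_sum, hV]

theorem four_mul_card_le [Fintype V] : 4 * Fintype.card ι ≤ Fintype.card V ^ 2 + 8 := by
  rcases isEmpty_or_nonempty V with hV | hV
  · have : IsEmpty ι := Function.isEmpty src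
    simp
  have : Nonempty (Scc src tgt) := ⟨scc src tgt hV.some⟩
  rw [← card_univ, ← card_filter_add_card_filter_not
    fun i => scc src tgt (src i) = scc src tgt (tgt i)]
  exact four_mul_add_le_sq_add_eight Fintype.card_pos (Fintype.card_quotient_le _)
    h.card_inner_add_le h.four_mul_card_cross_le

end ArcsEssential

end Condensation

lemma mem_of_arcReach {α : Type*} [DecidableEq α] {src tgt : ι → Finset α} {M : Finset ι}
    {a : α} {u v : Finset α} (hM : ∀ j ∈ M, a ∉ src j \ tgt j) (h : ArcReach src tgt M u v)
    (hu : a ∈ u) : a ∈ v := by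
  induction h with
  | refl => exact hu
  | tail _ hstep ih =>
    obtain ⟨j, hj, rfl, rfl⟩ := hstep
    by_contra ha
    exact hM j hj (mem_sdiff.2 ⟨ih, ha⟩)

lemma arcsEssential_of_sdiff_eq_singleton [Fintype ι] [DecidableEq ι] {α : Type*}
    [DecidableEq α] {src tgt : ι → Finset α} {lab : ι → α} (hlab : lab.Injective)
    (h : ∀ i, src i \ tgt i = {lab i}) : ArcsEssential src tgt := by
  intro i hi
  have hmem : lab i ∈ src i \ tgt i := by rw [h i]; exact mem_singleton_self _
  refine (mem_sdiff.1 hmem).2 (mem_of_arcReach (fun j hj => ?_) hi (mem_sdiff.1 hmem).1)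
  rw [h j, mem_singleton]
  exact hlab.ne (ne_of_mem_erase hj).symm

lemma ArcsEssential.of_comp [Fintype ι] [DecidableEq ι] {W : Type*} {src tgt : ι → V}
    (f : V → W) (h : ArcsEssential (f ∘ src) (f ∘ tgt)) : ArcsEssential src tgt :=
  fun i hi => h i (hi.map f)

theorem family_size_lower_bound_general (n : ℕ) (F : Finset (Finset ℕ))
    (h : ∀ i ∈ Finset.Icc 1 n, ∃ A ∈ F, ∃ B ∈ F, A \ B = {i}) :
    (F.card : ℝ) ≥ 2 * Real.sqrt ((n : ℝ) - 2) := by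
  choose A hA B hB hAB using h
  let src (i : Finset.Icc 1 n) : F := ⟨A i i.2, hA i i.2⟩
  let tgt (i : Finset.Icc 1 n) : F := ⟨B i i.2, hB i i.2⟩
  have hess : ArcsEssential src tgt := .of_comp Subtype.val
    (arcsEssential_of_sdiff_eq_singleton Subtype.val_injective fun i => hAB i i.2)
  have hcard : 4 * n ≤ F.card ^ 2 + 8 := by simpa using hess.four_mul_card_le
  have hsqrt : Real.sqrt ((n : ℝ) - 2) ≤ F.card / 2 := by
    refine Real.sqrt_le_iff.2 ⟨by positivity, ?_⟩
    have : (4 * n : ℝ) ≤ F.card ^ 2 + 8 := by exact_mod_cast hcard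
    linarith
  linarith

/-- If `F` is a family of subsets of `[n]` such that for every `i ∈ [n]` there are
`A, B ∈ F` with `A \ B = {i}`, then `|F| ≥ 2√(n-2)`. -/
theorem family_size_lower_bound (n : ℕ) (F : Finset (Finset ℕ))
    (hsub : ∀ A ∈ F, A ⊆ Finset.Icc 1 n)
    (h : ∀ i ∈ Finset.Icc 1 n, ∃ A ∈ F, ∃ B ∈ F, A \ B = {i}) :
    (F.card : ℝ) ≥ 2 * Real.sqrt ((n : ℝ) - 2) :=
  family_size_lower_bound_general n F h
end

section
/- For every n ∈ ℕ there exists a digraph D on n vertices with ⌊n²/4⌋ edges that contains no transitive cycle TC_k for any k ≥ 3. (Hence the bound ⌊n²/4⌋ + 2 for TC-free digraphs is tight up to an additive constant.) -/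
/-!
A digraph in which every edge goes from a class `A` to a disjoint class `B` has no directed path
of length two, while `TC_k` for `k ≥ 3` contains the path `1 → 2 → 3`. Splitting `n` vertices
into classes of sizes `⌊n/2⌋` and `⌈n/2⌉` gives `⌊n/2⌋ ⌈n/2⌉ = ⌊n²/4⌋` edges.
-/

open Finset

theorem Nat.div_two_mul_sub_div_two (n : ℕ) : n / 2 * (n - n / 2) = n ^ 2 / 4 := by
  rcases Nat.even_or_odd' n with ⟨m, rfl | rfl⟩
  · rw [show 2 * m / 2 = m by omega, show 2 * m - m = m by omega,
      show (2 * m) ^ 2 = 4 * (m * m) by ring]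
    omega
  · rw [show (2 * m + 1) / 2 = m by omega, show 2 * m + 1 - m = m + 1 by omega,
      show (2 * m + 1) ^ 2 = 4 * (m * (m + 1)) + 1 by ring]
    omega

theorem not_containsTC_of_no_two_path {n k : ℕ} {E : Finset (Fin n × Fin n)} (hk : 3 ≤ k)
    (hE : ∀ a b c, (a, b) ∈ E → (b, c) ∉ E) : ¬ ContainsTC n k E := by
  rintro ⟨φ, -, hpath, -⟩
  exact hE _ _ _ (hpath 0 (by omega)) (hpath 1 (by omega))

section Bipartite

variable {α : Type*} {s t : Finset α}

theorem Finset.ne_of_mem_product_of_disjoint (hst : Disjoint s t) {e : α × α}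
    (he : e ∈ s ×ˢ t) : e.1 ≠ e.2 := fun h =>
  disjoint_left.mp hst (mem_product.mp he).1 (h ▸ (mem_product.mp he).2)

theorem Finset.notMem_product_of_mem_product_of_disjoint (hst : Disjoint s t) {a b c : α}
    (hab : (a, b) ∈ s ×ˢ t) : (b, c) ∉ s ×ˢ t := fun hbc =>
  disjoint_left.mp hst (mem_product.mp hbc).1 (mem_product.mp hab).2

end Bipartite

theorem Fin.card_filter_val_lt_div_two_mul_compl (n : ℕ) :
    #{i : Fin n | i < n / 2} * #({i | i < n / 2} : Finset (Fin n))ᶜ = n ^ 2 / 4 := by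
  rw [card_compl, Fin.card_filter_val_lt, Fintype.card_fin, min_eq_right (Nat.div_le_self n 2),
    Nat.div_two_mul_sub_div_two]

/-- For every `n` there is a digraph on `n` vertices with `⌊n²/4⌋` edges containing
no transitive cycle `TC_k` for any `k ≥ 3`. -/
theorem tc_free_extremal_example (n : ℕ) :
    ∃ E : Finset (Fin n × Fin n), (∀ e ∈ E, e.1 ≠ e.2) ∧
      E.card = n ^ 2 / 4 ∧ ∀ k, 3 ≤ k → ¬ ContainsTC n k E := by
  set A : Finset (Fin n) := {i | i < n / 2}
  have hA : Disjoint A Aᶜ := disjoint_compl_right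
  refine ⟨A ×ˢ Aᶜ, fun e he => ne_of_mem_product_of_disjoint hA he, ?_, fun k hk => ?_⟩
  · rw [card_product, Fin.card_filter_val_lt_div_two_mul_compl]
  · exact not_containsTC_of_no_two_path hk fun _ _ _ =>
      notMem_product_of_mem_product_of_disjoint hA
end

section
/- Let n be a perfect square with m = √n. For s ∈ {0,1,...,m-1} let A_s = {sm+1, sm+2, ..., sm+m} ⊆ [n], and for t ∈ [m] let B_t = [n] \ {t, t+m, t+2m, ..., t+(m-1)m}. Then for every i ∈ [n] there exists exactly one pair (A, B) with A ∈ {A_s} and B ∈ {B_t} such that A \ B = {i}; namely, if i = sm + t with s ∈ {0,...,m-1}, t ∈ [m], then A_s \ B_t = {i}. -/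
/-!
Every `i ∈ [m²]` is written uniquely as `i = s m + t` with `s < m` and `1 ≤ t ≤ m`
(division of `i - 1` by `m`). The block `A_s` is contained in `[m²]`, so `A_s \ B_t` is the
intersection of the block `A_s` with the residue class `{t, t + m, …, t + (m-1)m}`; by the
uniqueness of the representation this intersection is `{s m + t}`. Hence `A_s \ B_t = {i}`
forces `s m + t = i`, which determines `(s, t)`.
-/

open Finset

namespace Nat

theorem eq_and_eq_of_mul_add_eq_mul_add {m s s' t t' : ℕ} (ht : t ∈ Icc 1 m)
    (ht' : t' ∈ Icc 1 m) (h : s * m + t = s' * m + t') : s = s' ∧ t = t' := by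
  rw [mem_Icc] at ht ht'
  have hm : 0 < m := by omega
  have hdiv : (s * m + (t - 1)) / m = s ∧ (s * m + (t - 1)) % m = t - 1 :=
    (Nat.div_mod_unique hm).2 ⟨by rw [mul_comm]; omega, by omega⟩
  have hdiv' : (s * m + (t - 1)) / m = s' ∧ (s * m + (t - 1)) % m = t' - 1 :=
    (Nat.div_mod_unique hm).2 ⟨by rw [mul_comm]; omega, by omega⟩
  omega

theorem exists_mul_add_of_mem_Icc {m i : ℕ} (hi : i ∈ Icc 1 (m ^ 2)) :
    ∃ s < m, ∃ t ∈ Icc 1 m, i = s * m + t := by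
  rw [mem_Icc] at hi
  have hm : 0 < m := Nat.pos_of_ne_zero (by rintro rfl; omega)
  refine ⟨(i - 1) / m, ?_, (i - 1) % m + 1, mem_Icc.2 ⟨by omega, mod_lt _ hm⟩, ?_⟩
  · rw [div_lt_iff_lt_mul hm, ← sq]
    omega
  · have := div_add_mod' (i - 1) m
    omega

end Nat

theorem mem_Icc_mul_add_iff {m s x : ℕ} :
    x ∈ Icc (s * m + 1) (s * m + m) ↔ ∃ t ∈ Icc 1 m, x = s * m + t := by
  simp only [mem_Icc]
  constructor
  · intro hx
    exact ⟨x - s * m, by omega, by omega⟩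
  · rintro ⟨t, ht, rfl⟩
    omega

theorem Icc_mul_add_subset_Icc_sq {m s : ℕ} (hs : s < m) :
    Icc (s * m + 1) (s * m + m) ⊆ Icc 1 (m ^ 2) := by
  have : s * m + m ≤ m ^ 2 := by
    rw [sq, ← Nat.succ_mul]
    exact Nat.mul_le_mul_right m hs
  exact Icc_subset_Icc (by omega) this

theorem Icc_mul_add_inter_image_add_mul {m s t : ℕ} (hs : s < m) (ht : t ∈ Icc 1 m) :
    Icc (s * m + 1) (s * m + m) ∩ (range m).image (fun j => t + j * m) = {s * m + t} := by
  ext x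
  simp only [mem_inter, mem_Icc_mul_add_iff, mem_image, mem_range, mem_singleton]
  constructor
  · rintro ⟨⟨t', ht', rfl⟩, j, -, hj⟩
    obtain ⟨rfl, rfl⟩ := Nat.eq_and_eq_of_mul_add_eq_mul_add ht' ht (by omega : s * m + t' = j * m + t)
    rfl
  · rintro rfl
    exact ⟨⟨t, ht, rfl⟩, s, hs, add_comm _ _⟩

theorem Icc_mul_add_sdiff_sdiff_image_add_mul {m s t : ℕ} (hs : s < m) (ht : t ∈ Icc 1 m) :
    Icc (s * m + 1) (s * m + m) \ (Icc 1 (m ^ 2) \ (range m).image (fun j => t + j * m)) =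
      {s * m + t} := by
  rw [sdiff_sdiff_right', sdiff_eq_empty_iff_subset.2 (Icc_mul_add_subset_Icc_sq hs),
    sup_eq_union, empty_union, inf_eq_inter, Icc_mul_add_inter_image_add_mul hs ht]

theorem extremal_family_unique_pair_general (m n : ℕ) (hn : n = m ^ 2)
    (A : ℕ → Finset ℕ) (hA : ∀ s, A s = Finset.Icc (s * m + 1) (s * m + m))
    (B : ℕ → Finset ℕ)
    (hB : ∀ t, B t = Finset.Icc 1 n \ (Finset.range m).image (fun j => t + j * m)) :
    ∀ i ∈ Finset.Icc 1 n,
      (∃! p : ℕ × ℕ, p.1 < m ∧ p.2 ∈ Finset.Icc 1 m ∧ A p.1 \ B p.2 = {i}) ∧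
      (∀ s t : ℕ, s < m → t ∈ Finset.Icc 1 m → i = s * m + t → A s \ B t = {i}) := by
  subst hn
  have hAB : ∀ s t, s < m → t ∈ Icc 1 m → A s \ B t = {s * m + t} := fun s t hs ht => by
    rw [hA, hB, Icc_mul_add_sdiff_sdiff_image_add_mul hs ht]
  intro i hi
  obtain ⟨s₀, hs₀, t₀, ht₀, rfl⟩ := Nat.exists_mul_add_of_mem_Icc hi
  refine ⟨⟨(s₀, t₀), ⟨hs₀, ht₀, hAB s₀ t₀ hs₀ ht₀⟩, ?_⟩, ?_⟩
  · rintro ⟨s, t⟩ ⟨hs, ht, hst⟩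
    rw [hAB s t hs ht, singleton_inj] at hst
    obtain ⟨rfl, rfl⟩ := Nat.eq_and_eq_of_mul_add_eq_mul_add ht ht₀ hst
    rfl
  · intro s t hs ht hst
    rw [hst]
    exact hAB s t hs ht

/-- The family `F* = {A_s} ∪ {B_t}` on `[n]`, `n = m²`, where
`A_s = {sm+1, …, sm+m}` and `B_t = [n] \ {t, t+m, …, t+(m-1)m}`:
for every `i ∈ [n]` there is exactly one pair `(s, t)` with `A_s \ B_t = {i}`;
namely if `i = sm + t` then `A_s \ B_t = {i}`. -/
theorem extremal_family_unique_pair (m n : ℕ) (hm : 1 ≤ m) (hn : n = m ^ 2)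
    (A : ℕ → Finset ℕ) (hA : ∀ s, A s = Finset.Icc (s * m + 1) (s * m + m))
    (B : ℕ → Finset ℕ)
    (hB : ∀ t, B t = Finset.Icc 1 n \ (Finset.range m).image (fun j => t + j * m)) :
    ∀ i ∈ Finset.Icc 1 n,
      (∃! p : ℕ × ℕ, p.1 < m ∧ p.2 ∈ Finset.Icc 1 m ∧ A p.1 \ B p.2 = {i}) ∧
      (∀ s t : ℕ, s < m → t ∈ Finset.Icc 1 m → i = s * m + t → A s \ B t = {i}) :=
  extremal_family_unique_pair_general m n hn A hA B hB
end

section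
/- Let P be a poset with legs, n ≥ 3, and let F ⊆ 2^{[n]} be an induced P-saturated family. Then |F| ≥ n + 1. -/
/-- `φ` is an induced-copy map of the poset `P` into the family `F`
(posets are finite collections of finite subsets of `ℕ`, ordered by inclusion). -/
def IsCopyMap (P F : Finset (Finset ℕ)) (φ : Finset ℕ → Finset ℕ) : Prop :=
  Set.InjOn φ ↑P ∧ (∀ A ∈ P, φ A ∈ F) ∧ ∀ A ∈ P, ∀ B ∈ P, (φ A ⊆ φ B ↔ A ⊆ B)

/-- `F` contains an induced copy of the poset `P`. -/
def ContainsInduced (P F : Finset (Finset ℕ)) : Prop := ∃ φ, IsCopyMap P F φ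

/-- `F ⊆ 2^[n]` is induced `P`-saturated. -/
def InducedSaturated (n : ℕ) (P F : Finset (Finset ℕ)) : Prop :=
  (∀ A ∈ F, A ⊆ Finset.Icc 1 n) ∧ ¬ ContainsInduced P F ∧
  ∀ S ⊆ Finset.Icc 1 n, S ∉ F → ContainsInduced P (insert S F)

/-- `P` has legs `L1, L2` and hip `H`. -/
def LegsAt (P : Finset (Finset ℕ)) (L1 L2 H : Finset ℕ) : Prop :=
  L1 ∈ P ∧ L2 ∈ P ∧ H ∈ P ∧ L1 ≠ L2 ∧ L1 ≠ H ∧ L2 ≠ H ∧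
  ¬ L1 ⊆ L2 ∧ ¬ L2 ⊆ L1 ∧ L1 ⊆ H ∧ L2 ⊆ H ∧
  ∀ A ∈ P, A ≠ L1 → A ≠ L2 → A ≠ H → H ⊆ A

/-- `P` has legs. -/
def HasLegs (P : Finset (Finset ℕ)) : Prop := ∃ L1 L2 H, LegsAt P L1 L2 H

/-- `sat*(n, P)`: the minimum size of an induced `P`-saturated family in `2^[n]`. -/
noncomputable def satStar (n : ℕ) (P : Finset (Finset ℕ)) : ℕ :=
  sInf {k | ∃ F : Finset (Finset ℕ), InducedSaturated n P F ∧ F.card = k}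

/-!
The empty set lies in `F`, since a poset with legs has no minimum. The heart of the matter is
that for every `i ∈ [n]` the family `F` contains an edge `{A, A ∪ {i}}` of the cube. If not,
take `w` maximal among the members of `F` with `i ∉ w` such that the members of `F` inside
`w ∪ {i}` lie inside `w` and form a chain (`w = ∅` is one). Adding `w ∪ {i}` to `F` creates a
copy of `P`, and `w ∪ {i}` must be the image of a leg, since otherwise the two legs would map
to incomparable members of `F` inside `w`. The members of `F` below the image of the hip form
a chain, as two incomparable ones could replace the legs and give a copy of `P` inside `F`.
Hence `w` lies strictly below the image `b` of the other leg, and `b` has the defining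
properties of `w`, contradicting maximality.

Finally, a nonempty family with edges in `n` directions has at least `n + 1` members: the
projection `B ↦ B \ {i}` merges the two ends of an edge in direction `i` and keeps the edges
in all other directions.
-/

theorem IsCopyMap.of_subset_iff {P F : Finset (Finset ℕ)} {φ : Finset ℕ → Finset ℕ}
    (hmem : ∀ A ∈ P, φ A ∈ F) (hφ : ∀ A ∈ P, ∀ B ∈ P, (φ A ⊆ φ B ↔ A ⊆ B)) :
    IsCopyMap P F φ :=
  ⟨fun A hA B hB hAB => Finset.Subset.antisymm ((hφ A hA B hB).1 (subset_of_eq hAB))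
    ((hφ B hB A hA).1 (subset_of_eq hAB.symm)), hmem, hφ⟩

theorem IsCopyMap.mem_of_ne {P F : Finset (Finset ℕ)} {φ : Finset ℕ → Finset ℕ}
    {S X Z : Finset ℕ} (hφ : IsCopyMap P (insert S F) φ) (hX : X ∈ P) (hXS : φ X = S)
    (hZ : Z ∈ P) (hZX : Z ≠ X) : φ Z ∈ F :=
  (Finset.mem_insert.1 (hφ.2.1 Z hZ)).resolve_left fun h => hZX (hφ.1 hZ hX (h.trans hXS.symm))

theorem IsCopyMap.exists_eq_of_not_containsInduced {P F : Finset (Finset ℕ)}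
    {φ : Finset ℕ → Finset ℕ} {S : Finset ℕ} (hfree : ¬ ContainsInduced P F)
    (hφ : IsCopyMap P (insert S F) φ) : ∃ X ∈ P, φ X = S := by
  by_contra! h
  exact hfree ⟨φ, hφ.1, fun A hA => (Finset.mem_insert.1 (hφ.2.1 A hA)).resolve_left (h A hA),
    hφ.2.2⟩

namespace LegsAt

variable {P : Finset (Finset ℕ)} {L1 L2 H X : Finset ℕ}

theorem symm (hL : LegsAt P L1 L2 H) : LegsAt P L2 L1 H := by
  obtain ⟨h1, h2, hH, h12, h1H, h2H, hn12, hn21, hs1, hs2, habove⟩ := hL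
  exact ⟨h2, h1, hH, h12.symm, h2H, h1H, hn21, hn12, hs2, hs1,
    fun A hA hA2 hA1 => habove A hA hA1 hA2⟩

theorem hip_subset (hL : LegsAt P L1 L2 H) (hX : X ∈ P) (hX1 : X ≠ L1) (hX2 : X ≠ L2) :
    H ⊆ X := by
  have ⟨_, _, _, _, _, _, _, _, _, _, habove⟩ := hL
  by_cases hXH : X = H
  · exact hXH ▸ Finset.Subset.refl X
  · exact habove X hX hX1 hX2 hXH

theorem left_ssubset (hL : LegsAt P L1 L2 H) (hX : X ∈ P) (hX1 : X ≠ L1) (hX2 : X ≠ L2) :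
    L1 ⊂ X := by
  have ⟨_, _, _, _, h1H, _, _, _, hs1, _, _⟩ := hL
  exact (hs1.ssubset_of_ne h1H).trans_subset (hL.hip_subset hX hX1 hX2)

theorem exists_not_subset (hL : LegsAt P L1 L2 H) (hX : X ∈ P) : ∃ Y ∈ P, ¬ X ⊆ Y := by
  have ⟨h1, h2, _, _, _, _, hn12, hn21, _, _, _⟩ := hL
  by_cases hX1 : X = L1
  · exact ⟨L2, h2, hX1 ▸ hn12⟩
  by_cases hX2 : X = L2
  · exact ⟨L1, h1, hX2 ▸ hn21⟩
  exact ⟨L1, h1, not_subset_of_ssubset (hL.left_ssubset hX hX1 hX2)⟩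

theorem isChain_below_hip {F : Finset (Finset ℕ)} {φ : Finset ℕ → Finset ℕ}
    (hL : LegsAt P L1 L2 H) (hfree : ¬ ContainsInduced P F)
    (hφ : ∀ A ∈ P, ∀ B ∈ P, (φ A ⊆ φ B ↔ A ⊆ B))
    (himg : ∀ Z ∈ P, Z ≠ L1 → Z ≠ L2 → φ Z ∈ F) :
    IsChain (· ⊆ ·) {p | p ∈ F ∧ p ⊆ φ H} := by
  rintro p ⟨hp, hpH⟩ q ⟨hq, hqH⟩ -
  by_contra! hincomp
  obtain ⟨hpq, hqp⟩ := hincomp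
  have ⟨h1, h2, hH, h12, _, _, hn12, hn21, _, _, _⟩ := hL
  have hpq_below (Z) (hZ : Z ∈ P) (hZ1 : Z ≠ L1) (hZ2 : Z ≠ L2) :
      p ⊆ φ Z ∧ q ⊆ φ Z ∧ ¬ φ Z ⊆ p ∧ ¬ φ Z ⊆ q := by
    have hHZ : φ H ⊆ φ Z := (hφ H hH Z hZ).2 (hL.hip_subset hZ hZ1 hZ2)
    exact ⟨hpH.trans hHZ, hqH.trans hHZ, fun h => hqp (hqH.trans (hHZ.trans h)),
      fun h => hpq (hpH.trans (hHZ.trans h))⟩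
  set ψ : Finset ℕ → Finset ℕ := fun Z => if Z = L1 then p else if Z = L2 then q else φ Z
  have hψ1 : ψ L1 = p := if_pos rfl
  have hψ2 : ψ L2 = q := (if_neg h12.symm).trans (if_pos rfl)
  have hψ (Z) (hZ1 : Z ≠ L1) (hZ2 : Z ≠ L2) : ψ Z = φ Z := (if_neg hZ1).trans (if_neg hZ2)
  have hcases (Z) : L1 = Z ∨ L2 = Z ∨ Z ≠ L1 ∧ Z ≠ L2 := by tauto
  refine hfree ⟨ψ, IsCopyMap.of_subset_iff ?_ ?_⟩
  · intro Z hZ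
    obtain rfl | rfl | ⟨hZ1, hZ2⟩ := hcases Z
    · exact hψ1 ▸ hp
    · exact hψ2 ▸ hq
    · exact hψ Z hZ1 hZ2 ▸ himg Z hZ hZ1 hZ2
  · intro A hA B hB
    obtain rfl | rfl | ⟨hA1, hA2⟩ := hcases A <;> obtain rfl | rfl | ⟨hB1, hB2⟩ := hcases B
    · exact iff_of_true (Finset.Subset.refl _) (Finset.Subset.refl _)
    · rw [hψ1, hψ2]; exact iff_of_false hpq hn12
    · rw [hψ1, hψ B hB1 hB2]
      exact iff_of_true (hpq_below B hB hB1 hB2).1 (hL.left_ssubset hB hB1 hB2).subset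
    · rw [hψ1, hψ2]; exact iff_of_false hqp hn21
    · exact iff_of_true (Finset.Subset.refl _) (Finset.Subset.refl _)
    · rw [hψ2, hψ B hB1 hB2]
      exact iff_of_true (hpq_below B hB hB1 hB2).2.1 (hL.symm.left_ssubset hB hB2 hB1).subset
    · rw [hψ1, hψ A hA1 hA2]
      exact iff_of_false (hpq_below A hA hA1 hA2).2.2.1
        (not_subset_of_ssubset (hL.left_ssubset hA hA1 hA2))
    · rw [hψ2, hψ A hA1 hA2]
      exact iff_of_false (hpq_below A hA hA1 hA2).2.2.2
        (not_subset_of_ssubset (hL.symm.left_ssubset hA hA2 hA1))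
    · rw [hψ A hA1 hA2, hψ B hB1 hB2]
      exact hφ A hA B hB

theorem empty_mem {F : Finset (Finset ℕ)} {n : ℕ} (hL : LegsAt P L1 L2 H)
    (hF : InducedSaturated n P F) : ∅ ∈ F := by
  by_contra h
  obtain ⟨φ, hφ⟩ := hF.2.2 ∅ (Finset.empty_subset _) h
  obtain ⟨X, hX, hXe⟩ := hφ.exists_eq_of_not_containsInduced hF.2.1
  obtain ⟨Y, hY, hXY⟩ := hL.exists_not_subset hX
  exact hXY ((hφ.2.2 X hX Y hY).1 (hXe ▸ Finset.empty_subset _))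

end LegsAt

section Edges

variable {α : Type*} [DecidableEq α]

def HasEdge (G : Finset (Finset α)) (i : α) : Prop :=
  ∃ A ∈ G, i ∉ A ∧ insert i A ∈ G

theorem HasEdge.image_erase {G : Finset (Finset α)} {i x : α} (h : HasEdge G i) (hix : i ≠ x) :
    HasEdge (G.image (·.erase x)) i := by
  obtain ⟨A, hA, hiA, hiA'⟩ := h
  refine ⟨A.erase x, Finset.mem_image_of_mem _ hA, fun h => hiA (Finset.mem_of_mem_erase h), ?_⟩
  rw [← Finset.erase_insert_of_ne hix]
  exact Finset.mem_image_of_mem _ hiA'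

theorem HasEdge.card_image_erase_lt {G : Finset (Finset α)} {x : α} (h : HasEdge G x) :
    (G.image (·.erase x)).card < G.card := by
  obtain ⟨A, hA, hxA, hxA'⟩ := h
  refine Finset.card_image_le.lt_of_ne fun hcard => hxA ?_
  have hAx : A = insert x A := Finset.card_image_iff.1 hcard hA hxA' <| by
    simp only [Finset.erase_insert hxA, Finset.erase_eq_of_notMem hxA]
  exact hAx ▸ Finset.mem_insert_self x A

theorem card_add_one_le_of_forall_hasEdge (I : Finset α) {G : Finset (Finset α)}
    (hG : G.Nonempty) (h : ∀ i ∈ I, HasEdge G i) : I.card + 1 ≤ G.card := by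
  induction I using Finset.induction_on generalizing G with
  | empty => simpa using hG.card_pos
  | insert x I hxI ih =>
    have hlt := (h x (Finset.mem_insert_self x I)).card_image_erase_lt
    have hle := ih (hG.image _) fun i hi =>
      (h i (Finset.mem_insert_of_mem hi)).image_erase (ne_of_mem_of_not_mem hi hxI)
    rw [Finset.card_insert_of_notMem hxI]
    omega

end Edges

structure ChainBase (F : Finset (Finset ℕ)) (i : ℕ) (w : Finset ℕ) : Prop where
  mem : w ∈ F
  notMem : i ∉ w
  subset_of_subset_insert : ∀ a ∈ F, a ⊆ insert i w → a ⊆ w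
  isChain : IsChain (· ⊆ ·) {p | p ∈ F ∧ p ⊆ w}

namespace ChainBase

variable {P F : Finset (Finset ℕ)} {L1 L2 H w : Finset ℕ} {i : ℕ}
  {φ : Finset ℕ → Finset ℕ}

theorem empty (h0 : ∅ ∈ F) (hno : ¬ HasEdge F i) : ChainBase F i ∅ := by
  refine ⟨h0, Finset.notMem_empty i, fun a ha hai => ?_, ?_⟩
  · rcases Finset.subset_singleton_iff.1 hai with rfl | rfl
    · exact Finset.Subset.refl _
    · exact (hno ⟨∅, h0, Finset.notMem_empty i, ha⟩).elim
  · refine Set.Subsingleton.isChain fun p hp q hq => ?_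
    rw [Finset.subset_empty.1 hp.2, Finset.subset_empty.1 hq.2]

theorem eq_leg_of_isCopyMap {X : Finset ℕ} (hL : LegsAt P L1 L2 H) (hw : ChainBase F i w)
    (hφ : IsCopyMap P (insert (insert i w) F) φ) (hX : X ∈ P) (hXS : φ X = insert i w) :
    X = L1 ∨ X = L2 := by
  by_contra! hX12
  obtain ⟨hX1, hX2⟩ := hX12
  have ⟨h1, h2, _, _, _, _, hn12, hn21, hs1, hs2, _⟩ := hL
  have hHX := hL.hip_subset hX hX1 hX2
  have hleg (L) (hLP : L ∈ P) (hLX : L ≠ X) (hLH : L ⊆ H) : φ L ∈ F ∧ φ L ⊆ w :=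
    have hmem := hφ.mem_of_ne hX hXS hLP hLX
    ⟨hmem, hw.subset_of_subset_insert _ hmem (hXS ▸ (hφ.2.2 L hLP X hX).2 (hLH.trans hHX))⟩
  rcases hw.isChain.total (hleg L1 h1 hX1.symm hs1) (hleg L2 h2 hX2.symm hs2) with h12 | h21
  · exact hn12 ((hφ.2.2 L1 h1 L2 h2).1 h12)
  · exact hn21 ((hφ.2.2 L2 h2 L1 h1).1 h21)

theorem exists_ssuperset_of_isCopyMap_leg (hL : LegsAt P L1 L2 H)
    (hfree : ¬ ContainsInduced P F) (hno : ¬ HasEdge F i) (hw : ChainBase F i w)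
    (hφ : IsCopyMap P (insert (insert i w) F) φ) (hS : φ L1 = insert i w) :
    ∃ b, ChainBase F i b ∧ w ⊂ b := by
  have ⟨h1, h2, hH, h12, _, _, hn12, hn21, hs1, hs2, _⟩ := hL
  have hiff := hφ.2.2
  have hb : φ L2 ∈ F := hφ.mem_of_ne h1 hS h2 h12.symm
  have hchain := hL.isChain_below_hip hfree hiff fun Z hZ hZ1 _ => hφ.mem_of_ne h1 hS hZ hZ1
  have hSH : insert i w ⊆ φ H := hS ▸ (hiff L1 h1 H hH).2 hs1
  have hbH : φ L2 ⊆ φ H := (hiff L2 h2 H hH).2 hs2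
  have hbS : ¬ φ L2 ⊆ insert i w := hS ▸ fun h => hn21 ((hiff L2 h2 L1 h1).1 h)
  have hSb : ¬ insert i w ⊆ φ L2 := hS ▸ fun h => hn12 ((hiff L1 h1 L2 h2).1 h)
  have hwS := Finset.subset_insert i w
  have hwb : w ⊆ φ L2 := (hchain.total ⟨hw.mem, hwS.trans hSH⟩ ⟨hb, hbH⟩).resolve_right
    fun h => hbS (h.trans hwS)
  have hib : i ∉ φ L2 := fun h => hSb (Finset.insert_subset h hwb)
  refine ⟨φ L2, ⟨hb, hib, fun a ha hab => ?_, hchain.mono <|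
    Set.ofPred_subset_ofPred.2 fun p hp => ⟨hp.1, hp.2.trans hbH⟩⟩,
    hwb.ssubset_of_not_subset fun h => hbS (h.trans hwS)⟩
  by_cases hia : i ∈ a
  · have hiH : i ∈ φ H := hSH (Finset.mem_insert_self i w)
    have haH : a ⊆ φ H := hab.trans (Finset.insert_subset hiH hbH)
    refine (hchain.total ⟨ha, haH⟩ ⟨hb, hbH⟩).resolve_right fun hba =>
      hno ⟨φ L2, hb, hib, ?_⟩
    rwa [Finset.Subset.antisymm hab (Finset.insert_subset hia hba)] at ha
  · exact (Finset.subset_insert_iff_of_notMem hia).1 hab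

theorem exists_ssuperset {n : ℕ} (hL : LegsAt P L1 L2 H) (hF : InducedSaturated n P F)
    (hi : i ∈ Finset.Icc 1 n) (hno : ¬ HasEdge F i) (hw : ChainBase F i w) :
    ∃ b, ChainBase F i b ∧ w ⊂ b := by
  have hSF : insert i w ∉ F := fun h => hno ⟨w, hw.mem, hw.notMem, h⟩
  obtain ⟨φ, hφ⟩ := hF.2.2 _ (Finset.insert_subset hi (hF.1 w hw.mem)) hSF
  obtain ⟨X, hX, hXS⟩ := hφ.exists_eq_of_not_containsInduced hF.2.1
  rcases hw.eq_leg_of_isCopyMap hL hφ hX hXS with rfl | rfl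
  · exact hw.exists_ssuperset_of_isCopyMap_leg hL hF.2.1 hno hφ hXS
  · exact hw.exists_ssuperset_of_isCopyMap_leg hL.symm hF.2.1 hno hφ hXS

end ChainBase

theorem LegsAt.hasEdge {P F : Finset (Finset ℕ)} {L1 L2 H : Finset ℕ} {n i : ℕ}
    (hL : LegsAt P L1 L2 H) (hF : InducedSaturated n P F) (hi : i ∈ Finset.Icc 1 n) :
    HasEdge F i := by
  classical
  by_contra hno
  have h0 := hL.empty_mem hF
  obtain ⟨w, hw, hmax⟩ := (F.filter (ChainBase F i)).exists_maximal
    ⟨∅, Finset.mem_filter.2 ⟨h0, .empty h0 hno⟩⟩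
  obtain ⟨b, hb, hwb⟩ := (Finset.mem_filter.1 hw).2.exists_ssuperset hL hF hi hno
  exact hwb.2 (hmax (Finset.mem_filter.2 ⟨hb.mem, hb⟩) hwb.1)

theorem legs_saturated_lower_bound_general (P : Finset (Finset ℕ)) (hP : HasLegs P)
    (n : ℕ) (F : Finset (Finset ℕ))
    (hF : InducedSaturated n P F) : n + 1 ≤ F.card := by
  obtain ⟨L1, L2, H, hL⟩ := hP
  simpa using card_add_one_le_of_forall_hasEdge (Finset.Icc 1 n) ⟨∅, hL.empty_mem hF⟩
    fun i hi => hL.hasEdge hF hi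

/-- If `P` is a poset with legs, `n ≥ 3`, and `F ⊆ 2^[n]` is induced `P`-saturated,
then `|F| ≥ n + 1`. -/
theorem legs_saturated_lower_bound (P : Finset (Finset ℕ)) (hP : HasLegs P)
    (n : ℕ) (hn : 3 ≤ n) (F : Finset (Finset ℕ))
    (hF : InducedSaturated n P F) : n + 1 ≤ F.card :=
  legs_saturated_lower_bound_general P hP n F hF
end

section
/- For every n ≥ 3, every induced Y-saturated family F ⊆ 2^{[n]} satisfies |F| ≥ n + 2. -/
/-- The poset `Y`: two incomparable minimal elements below a common element,
which lies below a single maximal element. -/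
def posetY : Finset (Finset ℕ) := {{1}, {2}, {1, 2}, {1, 2, 3}}

open Finset

namespace YSaturation

variable {α : Type*}

/-- The remaining (in)comparabilities of an induced copy of `Y` follow from these. -/
structure IsYQuad (A B C D : Finset α) : Prop where
  not_left_subset : ¬A ⊆ B
  not_right_subset : ¬B ⊆ A
  left_subset : A ⊆ C
  right_subset : B ⊆ C
  ssubset_top : C ⊂ D

def HasY (F : Finset (Finset α)) : Prop :=
  ∃ A ∈ F, ∃ B ∈ F, ∃ C ∈ F, ∃ D ∈ F, IsYQuad A B C D

namespace IsYQuad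

variable {A B C D : Finset α}

theorem swap (q : IsYQuad A B C D) : IsYQuad B A C D :=
  ⟨q.not_right_subset, q.not_left_subset, q.right_subset, q.left_subset, q.ssubset_top⟩

theorem left_ne_right (q : IsYQuad A B C D) : A ≠ B :=
  fun h => q.not_left_subset h.subset

theorem left_ne_hip (q : IsYQuad A B C D) : A ≠ C :=
  fun h => q.not_right_subset (h ▸ q.right_subset)

theorem right_ne_hip (q : IsYQuad A B C D) : B ≠ C :=
  q.swap.left_ne_hip

theorem ne_top_of_subset {X : Finset α} (q : IsYQuad A B C D) (hX : X ⊆ C) : X ≠ D :=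
  (hX.trans_ssubset q.ssubset_top).ne

end IsYQuad

variable [DecidableEq α] {F : Finset (Finset α)} {U S X C D : Finset α} {i j : α}

theorem HasY.of_insert (h : HasY (insert S F)) :
    HasY F ∨ (∃ B ∈ F, ∃ C ∈ F, ∃ D ∈ F, IsYQuad S B C D) ∨
      (∃ A ∈ F, ∃ B ∈ F, ∃ D ∈ F, IsYQuad A B S D) ∨
      (∃ A ∈ F, ∃ B ∈ F, ∃ C ∈ F, IsYQuad A B C S) := by
  obtain ⟨A, hA, B, hB, C, hC, D, hD, q⟩ := h
  have mem {X : Finset α} (hX : X ∈ insert S F) (h : X ≠ S) : X ∈ F :=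
    mem_of_mem_insert_of_ne hX h
  by_cases hDS : D = S
  · subst hDS
    exact .inr <| .inr <| .inr ⟨A, mem hA (q.ne_top_of_subset q.left_subset), B,
      mem hB (q.ne_top_of_subset q.right_subset), C, mem hC (q.ne_top_of_subset subset_rfl), q⟩
  by_cases hCS : C = S
  · subst hCS
    exact .inr <| .inr <| .inl
      ⟨A, mem hA q.left_ne_hip, B, mem hB q.right_ne_hip, D, mem hD hDS, q⟩
  by_cases hAS : A = S
  · subst hAS
    exact .inr <| .inl ⟨B, mem hB q.left_ne_right.symm, C, mem hC hCS, D, mem hD hDS, q⟩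
  by_cases hBS : B = S
  · subst hBS
    exact .inr <| .inl ⟨A, mem hA hAS, C, mem hC hCS, D, mem hD hDS, q.swap⟩
  exact .inl ⟨A, mem hA hAS, B, mem hB hBS, C, mem hC hCS, D, mem hD hDS, q⟩

def below (F : Finset (Finset α)) (X : Finset α) : Finset (Finset α) := {Z ∈ F | Z ⊆ X}

theorem mem_below {Z : Finset α} : Z ∈ below F X ↔ Z ∈ F ∧ Z ⊆ X := mem_filter

theorem below_mono {X Y : Finset α} (h : X ⊆ Y) : below F X ⊆ below F Y :=
  fun _ hZ => mem_below.2 ⟨(mem_below.1 hZ).1, (mem_below.1 hZ).2.trans h⟩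

abbrev IsChainBelow (F : Finset (Finset α)) (X : Finset α) : Prop :=
  IsChain (· ⊆ ·) (below F X : Set (Finset α))

theorem IsYQuad.not_isChainBelow {A B : Finset α} (q : IsYQuad A B C D) (hA : A ∈ F)
    (hB : B ∈ F) (hX : C ⊆ X) : ¬IsChainBelow F X := fun hch =>
  (hch.total (mem_below.2 ⟨hA, q.left_subset.trans hX⟩)
    (mem_below.2 ⟨hB, q.right_subset.trans hX⟩)).elim q.not_left_subset q.not_right_subset

theorem isChainBelow_of_ssubset (hF : ¬HasY F) (hC : C ∈ F) (hD : D ∈ F) (hCD : C ⊂ D) :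
    IsChainBelow F C := by
  intro Z₁ hZ₁ Z₂ hZ₂ _
  by_contra! h
  exact hF ⟨Z₁, (mem_below.1 hZ₁).1, Z₂, (mem_below.1 hZ₂).1, C, hC, D, hD,
    ⟨h.1, h.2, (mem_below.1 hZ₁).2, (mem_below.1 hZ₂).2, hCD⟩⟩

theorem exists_leg_of_hasY_insert (hF : ¬HasY F) (h : HasY (insert S F))
    (hS : IsChainBelow F S) : ∃ B ∈ F, ∃ C ∈ F, ∃ D ∈ F, IsYQuad S B C D := by
  rcases h.of_insert with hY | hleg | ⟨A, hA, B, hB, D, -, q⟩ | ⟨A, hA, B, hB, C, -, q⟩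
  · exact absurd hY hF
  · exact hleg
  · exact absurd hS (q.not_isChainBelow hA hB subset_rfl)
  · exact absurd hS (q.not_isChainBelow hA hB q.ssubset_top.subset)

theorem isChainBelow_empty : IsChainBelow F ∅ :=
  Set.Subsingleton.isChain fun Z₁ hZ₁ Z₂ hZ₂ => by
    rw [subset_empty.1 (mem_below.1 hZ₁).2, subset_empty.1 (mem_below.1 hZ₂).2]

theorem empty_mem (hF : ¬HasY F) (hsat : ∀ S ⊆ U, S ∉ F → HasY (insert S F)) : ∅ ∈ F := by
  by_contra h
  obtain ⟨B, -, _, -, _, -, q⟩ :=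
    exists_leg_of_hasY_insert hF (hsat ∅ (empty_subset U) h) isChainBelow_empty
  exact q.not_left_subset (empty_subset B)

/-- If every member of `F` had a chain down-set, saturation would put every `S ⊆ U` with
`|S| ≥ |U| - 1` into `F`; but `U` lies above the incomparable `U \ {i}` and `U \ {j}`. -/
theorem exists_not_isChainBelow (hU : 1 < #U) (hFU : ∀ A ∈ F, A ⊆ U) (hF : ¬HasY F)
    (hsat : ∀ S ⊆ U, S ∉ F → HasY (insert S F)) : ∃ V ∈ F, ¬IsChainBelow F V := by
  by_contra! hchain
  have hmem : ∀ S ⊆ U, #U ≤ #S + 1 → S ∈ F := by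
    intro S hSU hS
    by_contra hSF
    rcases (hsat S hSU hSF).of_insert with hY | ⟨B, -, C, -, D, hD, q⟩ |
      ⟨A, hA, B, hB, D, hD, q⟩ | ⟨A, hA, B, hB, C, hC, q⟩
    · exact hF hY
    · have hSC : S ⊂ C := q.left_subset.ssubset_of_ne q.left_ne_hip
      have := card_lt_card hSC
      have := card_lt_card q.ssubset_top
      have := card_le_card (hFU D hD)
      omega
    · exact q.not_isChainBelow hA hB q.ssubset_top.subset (hchain D hD)
    · exact q.not_isChainBelow hA hB subset_rfl (hchain C hC)
  obtain ⟨i, hi, j, hj, hij⟩ := one_lt_card.1 hU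
  have hcard {k : α} (hk : k ∈ U) : #U ≤ #(U.erase k) + 1 := by rw [card_erase_of_mem hk]; omega
  have herase {k : α} (hk : k ∈ U) : U.erase k ∈ below F U :=
    mem_below.2 ⟨hmem _ (erase_subset k U) (hcard hk), erase_subset k U⟩
  rcases (hchain U (hmem U subset_rfl (by omega))).total (herase hi) (herase hj) with h | h
  · exact (mem_erase.1 (h (mem_erase.2 ⟨hij.symm, hj⟩))).1 rfl
  · exact (mem_erase.1 (h (mem_erase.2 ⟨hij, hi⟩))).1 rfl

structure IsEntry (F : Finset (Finset α)) (X : Finset α) (i : α) : Prop where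
  mem : X ∈ F
  isChainBelow : IsChainBelow F X
  point_mem : i ∈ X
  point_notMem_of_ssubset : ∀ Z ∈ F, Z ⊂ X → i ∉ Z

theorem exists_isEntry_subset (hC : C ∈ F) (hch : IsChainBelow F C) (hi : i ∈ C) :
    ∃ E, IsEntry F E i ∧ E ⊆ C := by
  obtain ⟨E, hE⟩ := exists_minimal (s := {Z ∈ F | Z ⊆ C ∧ i ∈ Z})
    ⟨C, mem_filter.2 ⟨hC, subset_rfl, hi⟩⟩
  obtain ⟨hEF, hEC, hiE⟩ := mem_filter.1 hE.prop
  refine ⟨E, ⟨hEF, hch.mono (coe_subset.2 (below_mono hEC)), hiE, fun Z hZ hZE hiZ => ?_⟩, hEC⟩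
  exact hZE.not_subset (hE.2 (mem_filter.2 ⟨hZ, hZE.subset.trans hEC, hiZ⟩) hZE.subset)

theorem exists_isEntry (hF : ¬HasY F) (hsat : ∀ S ⊆ U, S ∉ F → HasY (insert S F)) (hi : i ∈ U) :
    ∃ E, IsEntry F E i := by
  have hch : IsChainBelow F {i} := fun Z₁ hZ₁ Z₂ hZ₂ _ => by
    rcases subset_singleton_iff.1 (mem_below.1 hZ₁).2 with rfl | rfl
    · exact .inl (empty_subset _)
    · exact .inr (mem_below.1 hZ₂).2
  by_cases hiF : {i} ∈ F
  · obtain ⟨E, hE, -⟩ := exists_isEntry_subset hiF hch (mem_singleton_self i)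
    exact ⟨E, hE⟩
  · obtain ⟨B, -, C, hC, D, hD, q⟩ :=
      exists_leg_of_hasY_insert hF (hsat _ (singleton_subset_iff.2 hi) hiF) hch
    obtain ⟨E, hE, -⟩ := exists_isEntry_subset hC (isChainBelow_of_ssubset hF hC hD q.ssubset_top)
      (q.left_subset (mem_singleton_self i))
    exact ⟨E, hE⟩

theorem IsChainBelow.exists_greatest_ssubset (hX : IsChainBelow F X) {Z₀ : Finset α}
    (hZ₀ : Z₀ ∈ F) (hZ₀X : Z₀ ⊂ X) : ∃ P ∈ F, P ⊂ X ∧ ∀ Z ∈ F, Z ⊂ X → Z ⊆ P := by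
  obtain ⟨P, hP⟩ := exists_maximal (s := {Z ∈ F | Z ⊂ X}) ⟨Z₀, mem_filter.2 ⟨hZ₀, hZ₀X⟩⟩
  obtain ⟨hPF, hPX⟩ := mem_filter.1 hP.prop
  refine ⟨P, hPF, hPX, fun Z hZ hZX => ?_⟩
  exact (hX.total (mem_below.2 ⟨hZ, hZX.subset⟩) (mem_below.2 ⟨hPF, hPX.subset⟩)).elim id
    (hP.2 (mem_filter.2 ⟨hZ, hZX⟩))

theorem card_below_le_card_below_add_one {P : Finset α} (hP : ∀ Z ∈ F, Z ⊂ X → Z ⊆ P) :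
    #(below F X) ≤ #(below F P) + 1 := by
  refine (card_le_card fun Z hZ => ?_).trans (card_insert_le X _)
  obtain ⟨hZF, hZX⟩ := mem_below.1 hZ
  rcases eq_or_ssubset_of_subset hZX with rfl | hZX
  · exact mem_insert_self Z _
  · exact mem_insert_of_mem (mem_below.2 ⟨hZF, hP Z hZF hZX⟩)

/-- If `X` is the entry of two points `i ≠ j`, then adding `i` to the member of `F` just below
`X` creates a `Y` with the new set as a leg; the hip of that `Y` has a chain down-set, and the
entry of `i` below the hip lies above the other leg, so its down-set is larger than that of `X`. -/
theorem IsEntry.exists_card_below_lt (hFU : ∀ A ∈ F, A ⊆ U) (hF : ¬HasY F)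
    (hsat : ∀ S ⊆ U, S ∉ F → HasY (insert S F)) (hij : i ≠ j) (hi : IsEntry F X i)
    (hj : IsEntry F X j) : ∃ E, IsEntry F E i ∧ #(below F X) < #(below F E) := by
  have hX : ∅ ⊂ X := empty_ssubset.2 ⟨i, hi.point_mem⟩
  obtain ⟨P, hPF, hPX, hPmax⟩ :=
    hi.isChainBelow.exists_greatest_ssubset (empty_mem hF hsat) hX
  have hiP : i ∉ P := hi.point_notMem_of_ssubset P hPF hPX
  have hSX : insert i P ⊂ X := by
    refine Finset.ssubset_iff_subset_ne.2 ⟨insert_subset hi.point_mem hPX.subset, fun h => ?_⟩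
    rcases mem_insert.1 (h ▸ hj.point_mem) with rfl | hjP
    · exact hij rfl
    · exact hj.point_notMem_of_ssubset P hPF hPX hjP
  have hSF : insert i P ∉ F := fun h => hiP (hPmax _ h hSX (mem_insert_self i P))
  obtain ⟨B, hB, C, hC, D, hD, q⟩ := exists_leg_of_hasY_insert hF
    (hsat _ (hSX.subset.trans (hFU X hi.mem)) hSF)
    (hi.isChainBelow.mono (coe_subset.2 (below_mono hSX.subset)))
  have hCch := isChainBelow_of_ssubset hF hC hD q.ssubset_top
  have hPB : P ⊆ B := (hCch.total (mem_below.2 ⟨hB, q.right_subset⟩)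
    (mem_below.2 ⟨hPF, (subset_insert i P).trans q.left_subset⟩)).resolve_left
    fun h => q.not_right_subset (h.trans (subset_insert i P))
  have hiB : i ∉ B := fun h => q.not_left_subset (insert_subset h hPB)
  obtain ⟨E, hE, hEC⟩ := exists_isEntry_subset hC hCch (q.left_subset (mem_insert_self i P))
  have hBE : B ⊆ E := (hCch.total (mem_below.2 ⟨hB, q.right_subset⟩)
    (mem_below.2 ⟨hE.mem, hEC⟩)).resolve_right fun h => hiB (h hE.point_mem)
  have hBP : B ∉ below F P := fun h =>
    q.not_right_subset ((mem_below.1 h).2.trans (subset_insert i P))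
  have hEBP : E ∉ insert B (below F P) := by
    rw [mem_insert, mem_below]
    rintro (rfl | ⟨-, hEP⟩)
    · exact hiB hE.point_mem
    · exact hiP (hEP hE.point_mem)
  refine ⟨E, hE, ?_⟩
  calc #(below F X) ≤ #(below F P) + 1 := card_below_le_card_below_add_one hPmax
    _ < #(insert E (insert B (below F P))) := by
      rw [card_insert_of_notMem hEBP, card_insert_of_notMem hBP]; omega
    _ ≤ #(below F E) := by
      refine card_le_card (insert_subset (mem_below.2 ⟨hE.mem, subset_rfl⟩)
        (insert_subset (mem_below.2 ⟨hB, hBE⟩) (below_mono (hPB.trans hBE))))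

theorem exists_isEntry_forall_card_below_le (hF : ¬HasY F)
    (hsat : ∀ S ⊆ U, S ∉ F → HasY (insert S F)) (hi : i ∈ U) :
    ∃ X, IsEntry F X i ∧ ∀ X', IsEntry F X' i → #(below F X') ≤ #(below F X) := by
  classical
  obtain ⟨E, hE⟩ := exists_isEntry hF hsat hi
  obtain ⟨X, hX, hXmax⟩ := exists_max_image {X ∈ F | IsEntry F X i} (fun X => #(below F X))
    ⟨E, mem_filter.2 ⟨hE.mem, hE⟩⟩
  exact ⟨X, (mem_filter.1 hX).2, fun X' hX' => hXmax X' (mem_filter.2 ⟨hX'.mem, hX'⟩)⟩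

theorem card_add_two_le_card (hU : 1 < #U) (hFU : ∀ A ∈ F, A ⊆ U) (hF : ¬HasY F)
    (hsat : ∀ S ⊆ U, S ∉ F → HasY (insert S F)) : #U + 2 ≤ #F := by
  obtain ⟨V, hV, hVch⟩ := exists_not_isChainBelow hU hFU hF hsat
  have hempty := empty_mem hF hsat
  choose! g hg hgmax using fun i (hi : i ∈ U) => exists_isEntry_forall_card_below_le hF hsat hi
  have hinj : Set.InjOn g U := fun i hi j hj hgij => by_contra fun hij => by
    obtain ⟨E, hE, hlt⟩ := (hg i hi).exists_card_below_lt hFU hF hsat hij (hgij ▸ hg j hj)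
    exact (hgmax i hi E hE).not_gt hlt
  have hmaps : Set.MapsTo g U ((F.erase ∅).erase V) := fun i hi => by
    refine mem_erase.2 ⟨fun h => hVch (h ▸ (hg i hi).isChainBelow), mem_erase.2 ⟨?_, (hg i hi).mem⟩⟩
    exact ne_empty_of_mem (hg i hi).point_mem
  have hVne : V ≠ ∅ := fun h => hVch (h ▸ isChainBelow_empty)
  have := card_le_card_of_injOn g hmaps hinj
  rw [card_erase_of_mem (mem_erase.2 ⟨hVne, hV⟩), card_erase_of_mem hempty] at this
  have := card_pos.2 ⟨_, hempty⟩
  omega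

end YSaturation

open YSaturation

theorem containsInduced_posetY_iff {G : Finset (Finset ℕ)} :
    ContainsInduced posetY G ↔ HasY G := by
  have h1 : ({1} : Finset ℕ) ∈ posetY := by decide
  have h2 : ({2} : Finset ℕ) ∈ posetY := by decide
  have h12 : ({1, 2} : Finset ℕ) ∈ posetY := by decide
  have h123 : ({1, 2, 3} : Finset ℕ) ∈ posetY := by decide
  constructor
  · rintro ⟨φ, -, hmem, hφ⟩
    refine ⟨_, hmem _ h1, _, hmem _ h2, _, hmem _ h12, _, hmem _ h123,
      ⟨?_, ?_, (hφ _ h1 _ h12).2 (by decide), (hφ _ h2 _ h12).2 (by decide), ?_⟩⟩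
    · exact mt (hφ _ h1 _ h2).1 (by decide)
    · exact mt (hφ _ h2 _ h1).1 (by decide)
    · exact ssubset_iff_subset_not_subset.2
        ⟨(hφ _ h12 _ h123).2 (by decide), mt (hφ _ h123 _ h12).1 (by decide)⟩
  · rintro ⟨A, hA, B, hB, C, hC, D, hD, q⟩
    let φ : Finset ℕ → Finset ℕ := fun X =>
      if X = {1} then A else if X = {2} then B else if X = {1, 2} then C else D
    have hAD := q.left_subset.trans q.ssubset_top.subset
    have hBD := q.right_subset.trans q.ssubset_top.subset
    have hCA : ¬C ⊆ A := fun h => q.not_right_subset (q.right_subset.trans h)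
    have hCB : ¬C ⊆ B := fun h => q.not_left_subset (q.left_subset.trans h)
    have hDA : ¬D ⊆ A := fun h => q.ssubset_top.not_subset (h.trans q.left_subset)
    have hDB : ¬D ⊆ B := fun h => q.ssubset_top.not_subset (h.trans q.right_subset)
    have hDC : ¬D ⊆ C := q.ssubset_top.not_subset
    have hφ : ∀ X ∈ posetY, ∀ Y ∈ posetY, φ X ⊆ φ Y ↔ X ⊆ Y := by
      simp only [posetY, mem_insert, mem_singleton]
      rintro X (rfl | rfl | rfl | rfl) Y (rfl | rfl | rfl | rfl) <;>
        simp +decide [φ, q.not_left_subset, q.not_right_subset, q.left_subset, q.right_subset,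
          q.ssubset_top.subset, hAD, hBD, hCA, hCB, hDA, hDB, hDC]
    refine ⟨φ, fun X hX Y hY h => subset_antisymm ((hφ X hX Y hY).1 h.subset)
      ((hφ Y hY X hX).1 h.superset), ?_, hφ⟩
    simp only [posetY, mem_insert, mem_singleton]
    rintro X (rfl | rfl | rfl | rfl) <;> simp +decide [φ, hA, hB, hC, hD]

/-- For `n ≥ 3`, every induced `Y`-saturated family `F ⊆ 2^[n]` has `|F| ≥ n + 2`. -/
theorem y_saturated_lower_bound (n : ℕ) (hn : 3 ≤ n) (F : Finset (Finset ℕ))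
    (hF : InducedSaturated n posetY F) : n + 2 ≤ F.card := by
  obtain ⟨hFU, hfree, hsat⟩ := hF
  simpa using card_add_two_le_card (U := Icc 1 n) (by simp; omega) hFU
    (containsInduced_posetY_iff.not.1 hfree) fun S hS h =>
      containsInduced_posetY_iff.1 (hsat S hS h)
end

section
/- For every n ≥ 3, the family F = {F ⊆ [n] : |F| ≥ n-1 or |F| ≤ 1} is induced X-saturated and has exactly 2n + 2 elements; hence sat*(n, X) ≤ 2n + 2. -/
/-- The poset `X`: two incomparable minimal elements below a middle element,
which lies below two incomparable maximal elements. -/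
def posetX : Finset (Finset ℕ) := {{1}, {2}, {1, 2}, {1, 2, 3}, {1, 2, 4}}

/-! The middle set `c` of an induced copy of `X` in `2^[n]` strictly contains a nonempty set and
is strictly contained in a proper subset of `[n]`, so `2 ≤ |c| ≤ n - 2`; the family of the layers
`0, 1, n - 1, n` has no such set. Conversely, a set `S` with `2 ≤ |S| ≤ n - 2` is the middle of a
copy of `X` whose other four sets are singletons `{a}, {b} ⊆ S` and complements of singletons
`[n] \ {i}, [n] \ {j} ⊇ S`. -/

open Finset

variable {α : Type*}

/-- Five elements in the position of an induced copy of `X`: the remaining comparabilities and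
incomparabilities all follow from these eight. -/
structure IsXShape [PartialOrder α] (b₁ b₂ c t₁ t₂ : α) : Prop where
  not_bot₁_le_bot₂ : ¬ b₁ ≤ b₂
  not_bot₂_le_bot₁ : ¬ b₂ ≤ b₁
  bot₁_le : b₁ ≤ c
  bot₂_le : b₂ ≤ c
  le_top₁ : c ≤ t₁
  le_top₂ : c ≤ t₂
  not_top₁_le_top₂ : ¬ t₁ ≤ t₂
  not_top₂_le_top₁ : ¬ t₂ ≤ t₁

namespace IsXShape

section PartialOrder

variable [PartialOrder α] {b₁ b₂ c t₁ t₂ : α} (hX : IsXShape b₁ b₂ c t₁ t₂)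
include hX

theorem bot₁_lt : b₁ < c :=
  hX.bot₁_le.lt_of_not_ge fun h => hX.not_bot₂_le_bot₁ (hX.bot₂_le.trans h)

theorem lt_top₁ : c < t₁ :=
  hX.le_top₁.lt_of_not_ge fun h => hX.not_top₁_le_top₂ (h.trans hX.le_top₂)

end PartialOrder

variable {b₁ b₂ c t₁ t₂ : Finset α} (hX : IsXShape b₁ b₂ c t₁ t₂)
include hX

theorem one_lt_card : 1 < #c := by
  obtain ⟨x, hx, -⟩ := not_subset.mp hX.not_bot₁_le_bot₂
  have := card_lt_card hX.bot₁_lt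
  have := card_pos.mpr ⟨x, hx⟩
  omega

theorem card_add_one_lt {u : Finset α} (h₁ : t₁ ⊆ u) (h₂ : t₂ ⊆ u) : #c + 1 < #u := by
  have ht₁u : t₁ ⊂ u := ssubset_of_subset_of_ne h₁ fun h => hX.not_top₂_le_top₁ (h ▸ h₂)
  have := card_lt_card hX.lt_top₁
  have := card_lt_card ht₁u
  omega

end IsXShape

theorem isXShape_singleton_erase [DecidableEq α] {s u : Finset α} {a b i j : α} (hsu : s ⊆ u)
    (ha : a ∈ s) (hb : b ∈ s) (hab : a ≠ b) (hi : i ∈ u \ s) (hj : j ∈ u \ s) (hij : i ≠ j) :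
    IsXShape {a} {b} s (u.erase i) (u.erase j) := by
  rw [mem_sdiff] at hi hj
  refine ⟨?_, ?_, singleton_subset_iff.mpr ha, singleton_subset_iff.mpr hb, ?_, ?_, ?_, ?_⟩
  · simpa using hab
  · simpa using hab.symm
  · exact fun x hx => mem_erase.mpr ⟨fun h => hi.2 (h ▸ hx), hsu hx⟩
  · exact fun x hx => mem_erase.mpr ⟨fun h => hj.2 (h ▸ hx), hsu hx⟩
  · exact fun h => notMem_erase j u (h (mem_erase.mpr ⟨hij.symm, hj.1⟩))
  · exact fun h => notMem_erase i u (h (mem_erase.mpr ⟨hij, hi.1⟩))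

theorem isCopyMap_of_subset_iff {P F : Finset (Finset ℕ)} {φ : Finset ℕ → Finset ℕ}
    (hmem : ∀ A ∈ P, φ A ∈ F) (hiff : ∀ A ∈ P, ∀ B ∈ P, (φ A ⊆ φ B ↔ A ⊆ B)) :
    IsCopyMap P F φ :=
  ⟨fun A hA B hB h => Subset.antisymm ((hiff A hA B hB).mp (h ▸ Subset.rfl))
    ((hiff B hB A hA).mp (h ▸ Subset.rfl)), hmem, hiff⟩

theorem containsInduced_posetX_iff {F : Finset (Finset ℕ)} :
    ContainsInduced posetX F ↔
      ∃ b₁ ∈ F, ∃ b₂ ∈ F, ∃ c ∈ F, ∃ t₁ ∈ F, ∃ t₂ ∈ F, IsXShape b₁ b₂ c t₁ t₂ := by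
  constructor
  · rintro ⟨φ, -, hmem, hiff⟩
    refine ⟨_, hmem {1} (by decide), _, hmem {2} (by decide), _, hmem {1, 2} (by decide),
      _, hmem {1, 2, 3} (by decide), _, hmem {1, 2, 4} (by decide), ?_⟩
    constructor
    all_goals first
      | exact (hiff _ (by decide) _ (by decide)).mpr (by decide)
      | exact mt (hiff _ (by decide) _ (by decide)).mp (by decide)
  · rintro ⟨b₁, hb₁, b₂, hb₂, c, hc, t₁, ht₁, t₂, ht₂, hX⟩
    let φ : Finset ℕ → Finset ℕ := fun A =>
      if A = {1} then b₁ else if A = {2} then b₂ else if A = {1, 2} then c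
      else if A = {1, 2, 3} then t₁ else t₂
    refine ⟨φ, isCopyMap_of_subset_iff ?_ ?_⟩
    · simp +decide [posetX, φ, *]
    · obtain ⟨h₁₂, h₂₁, h₁, h₂, h₁', h₂', h₁₂', h₂₁'⟩ := hX
      simp +decide only [posetX, mem_insert, mem_singleton, forall_eq_or_imp, ↓reduceIte,
        subset_singleton_iff, forall_eq, Std.le_refl, iff_false, iff_true, true_and, and_true, φ]
      and_intros
      all_goals first | exact (show _ ≤ _ by order) | exact (show ¬ _ ≤ _ by order)

def extremeLayers (n : ℕ) : Finset (Finset ℕ) :=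
  (Icc 1 n).powerset.filter fun S => n - 1 ≤ #S ∨ #S ≤ 1

theorem mem_extremeLayers {n : ℕ} {S : Finset ℕ} :
    S ∈ extremeLayers n ↔ S ⊆ Icc 1 n ∧ (n - 1 ≤ #S ∨ #S ≤ 1) := by
  rw [extremeLayers, mem_filter, mem_powerset]

theorem card_extremeLayers {n : ℕ} (hn : 3 ≤ n) : #(extremeLayers n) = 2 * n + 2 := by
  obtain ⟨k, rfl⟩ : ∃ k, n = k + 3 := ⟨n - 3, by omega⟩
  rw [extremeLayers, card_filter,
    sum_powerset_apply_card fun m => if k + 3 - 1 ≤ m ∨ m ≤ 1 then 1 else 0, Nat.card_Icc,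
    Nat.add_sub_cancel, sum_range_succ, sum_range_succ, sum_range_succ', sum_range_succ',
    sum_eq_zero fun m hm => ?_]
  · simp (disch := omega) only [zero_add, if_pos, Nat.choose_zero_right, Nat.choose_one_right,
      Nat.choose_self, Nat.choose_succ_self_right, smul_eq_mul, mul_one]
    omega
  · rw [mem_range] at hm
    rw [if_neg (by omega), smul_zero]

theorem not_containsInduced_posetX_extremeLayers (n : ℕ) :
    ¬ ContainsInduced posetX (extremeLayers n) := by
  rw [containsInduced_posetX_iff]
  rintro ⟨_, -, _, -, c, hc, t₁, ht₁, t₂, ht₂, hX⟩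
  rw [mem_extremeLayers] at hc ht₁ ht₂
  have hc_gt := hX.one_lt_card
  have hc_lt := hX.card_add_one_lt ht₁.1 ht₂.1
  rw [Nat.card_Icc] at hc_lt
  omega

theorem containsInduced_posetX_insert_extremeLayers {n : ℕ} {S : Finset ℕ} (hS : S ⊆ Icc 1 n)
    (hSn : S ∉ extremeLayers n) : ContainsInduced posetX (insert S (extremeLayers n)) := by
  rw [mem_extremeLayers, not_and, not_or] at hSn
  obtain ⟨hS_lt, hS_gt⟩ := hSn hS
  obtain ⟨a, ha, b, hb, hab⟩ := one_lt_card.mp (by omega : 1 < #S)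
  have hcompl : 1 < #(Icc 1 n \ S) := by
    rw [card_sdiff_of_subset hS, Nat.card_Icc]
    omega
  obtain ⟨i, hi, j, hj, hij⟩ := one_lt_card.mp hcompl
  have singleton_mem {x : ℕ} (hx : x ∈ S) : {x} ∈ insert S (extremeLayers n) :=
    mem_insert_of_mem (mem_extremeLayers.mpr ⟨singleton_subset_iff.mpr (hS hx), by simp⟩)
  have erase_mem {x : ℕ} (hx : x ∈ Icc 1 n \ S) :
      (Icc 1 n).erase x ∈ insert S (extremeLayers n) := by
    refine mem_insert_of_mem (mem_extremeLayers.mpr ⟨erase_subset _ _, Or.inl ?_⟩)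
    rw [card_erase_of_mem (mem_sdiff.mp hx).1, Nat.card_Icc]
    omega
  exact containsInduced_posetX_iff.mpr ⟨_, singleton_mem ha, _, singleton_mem hb, S,
    mem_insert_self _ _, _, erase_mem hi, _, erase_mem hj,
    isXShape_singleton_erase hS ha hb hab hi hj hij⟩

theorem inducedSaturated_extremeLayers (n : ℕ) : InducedSaturated n posetX (extremeLayers n) :=
  ⟨fun _ hA => (mem_extremeLayers.mp hA).1, not_containsInduced_posetX_extremeLayers n,
    fun _ => containsInduced_posetX_insert_extremeLayers⟩

theorem satStar_le_card {n : ℕ} {P F : Finset (Finset ℕ)} (hF : InducedSaturated n P F) :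
    satStar n P ≤ #F :=
  Nat.sInf_le ⟨F, hF, rfl⟩

/-- For `n ≥ 3`, the family `{F ⊆ [n] : |F| ≥ n-1 or |F| ≤ 1}` is induced `X`-saturated
with exactly `2n + 2` elements; hence `sat*(n, X) ≤ 2n + 2`. -/
theorem x_saturated_upper_bound (n : ℕ) (hn : 3 ≤ n) :
    InducedSaturated n posetX
      ((Finset.Icc 1 n).powerset.filter fun S => n - 1 ≤ S.card ∨ S.card ≤ 1) ∧
    ((Finset.Icc 1 n).powerset.filter fun S => n - 1 ≤ S.card ∨ S.card ≤ 1).card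
      = 2 * n + 2 ∧
    satStar n posetX ≤ 2 * n + 2 :=
  ⟨inducedSaturated_extremeLayers n, card_extremeLayers hn,
    card_extremeLayers hn ▸ satStar_le_card (inducedSaturated_extremeLayers n)⟩
end

section
/- For every n ≥ 3, sat*(n, Y) = n + 2. -/
/-!
Upper bound: `∅`, the singletons and `[n]` form an induced `Y`-saturated family, since any other
`S ⊆ [n]` contains two points `i ≠ j`, and then `{i}, {j}, S, [n]` is a copy of `Y`.

Lower bound: in a `Y`-free family the members below a non-maximal member form a chain, so the
non-maximal members form a tree under inclusion, rooted at `∅ ∈ F`. If a child `w` of `x` adds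
two or more new points, then for each new point `u` the set `insert u x` is missing from `F`, and
in the copy of `Y` it creates it can only be a leg; this puts `u` into the subtree of another
child of `x` that does not contain `u`. Induction over the tree then shows that the subtree above
`x` has more members than it has points outside `x`. By saturation every point of `[n]` lies in a
non-maximal member, so there are at least `n + 1` of them, and `F` also has a maximal member.
-/

open Finset

structure IsYConfig {α : Type*} (a b c d : Finset α) : Prop where
  left_not_subset : ¬ a ⊆ b
  right_not_subset : ¬ b ⊆ a
  left_subset_hip : a ⊆ c
  right_subset_hip : b ⊆ c
  hip_ssubset_top : c ⊂ d

namespace IsYConfig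

variable {α : Type*} {a b c d : Finset α}

theorem symm (h : IsYConfig a b c d) : IsYConfig b a c d :=
  ⟨h.right_not_subset, h.left_not_subset, h.right_subset_hip, h.left_subset_hip,
    h.hip_ssubset_top⟩

theorem one_lt_card_hip (h : IsYConfig a b c d) : 1 < c.card := by
  by_contra! hc
  obtain ⟨x, hxa, hxb⟩ := not_subset.mp h.left_not_subset
  obtain ⟨y, hyb, hya⟩ := not_subset.mp h.right_not_subset
  have hxy : x = y :=
    card_le_one.mp hc x (h.left_subset_hip hxa) y (h.right_subset_hip hyb)
  exact hxb (hxy ▸ hyb)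

theorem two_lt_card_top (h : IsYConfig a b c d) : 2 < d.card :=
  Nat.lt_of_le_of_lt h.one_lt_card_hip (card_lt_card h.hip_ssubset_top)

theorem left_ne_right (h : IsYConfig a b c d) : a ≠ b :=
  fun hab => h.left_not_subset hab.subset

theorem left_ne_hip (h : IsYConfig a b c d) : a ≠ c :=
  fun hac => h.right_not_subset (hac ▸ h.right_subset_hip)

theorem hip_ne_top (h : IsYConfig a b c d) : c ≠ d :=
  h.hip_ssubset_top.ne

theorem left_ne_top (h : IsYConfig a b c d) : a ≠ d :=
  fun had => h.hip_ssubset_top.not_subset (had ▸ h.left_subset_hip)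

end IsYConfig

theorem containsInduced_posetY_iff_s14 (G : Finset (Finset ℕ)) :
    ContainsInduced posetY G ↔
      ∃ a ∈ G, ∃ b ∈ G, ∃ c ∈ G, ∃ d ∈ G, IsYConfig a b c d := by
  constructor
  · rintro ⟨φ, -, hmem, hsub⟩
    have pos {A B} (hA : A ∈ posetY) (hB : B ∈ posetY) (h : A ⊆ B) : φ A ⊆ φ B :=
      (hsub A hA B hB).mpr h
    have neg {A B} (hA : A ∈ posetY) (hB : B ∈ posetY) (h : ¬ A ⊆ B) : ¬ φ A ⊆ φ B :=
      mt (hsub A hA B hB).mp h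
    exact ⟨_, hmem {1} (by decide), _, hmem {2} (by decide), _, hmem {1, 2} (by decide),
      _, hmem {1, 2, 3} (by decide), neg (by decide) (by decide) (by decide),
      neg (by decide) (by decide) (by decide), pos (by decide) (by decide) (by decide),
      pos (by decide) (by decide) (by decide), ssubset_def.mpr
        ⟨pos (by decide) (by decide) (by decide), neg (by decide) (by decide) (by decide)⟩⟩
  · rintro ⟨a, ha, b, hb, c, hc, d, hd, ⟨hab, hba, hac, hbc, hcd⟩⟩
    classical
    let φ : Finset ℕ → Finset ℕ := fun A =>
      if A = {1} then a else if A = {2} then b else if A = {1, 2} then c else d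
    have hca : ¬ c ⊆ a := fun h => hba (hbc.trans h)
    have hcb : ¬ c ⊆ b := fun h => hab (hac.trans h)
    have hdc := hcd.2
    have hda : ¬ d ⊆ a := fun h => hdc (h.trans hac)
    have hdb : ¬ d ⊆ b := fun h => hdc (h.trans hbc)
    have hsub : ∀ A ∈ posetY, ∀ B ∈ posetY, (φ A ⊆ φ B ↔ A ⊆ B) := by
      simp only [posetY, mem_insert, mem_singleton]
      rintro A (rfl | rfl | rfl | rfl) B (rfl | rfl | rfl | rfl) <;>
        simp +decide [φ] <;>
        first | assumption | exact hac.trans hcd.1 | exact hbc.trans hcd.1 | exact hcd.1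
    refine ⟨φ, fun A hA B hB hAB => ?_, fun A hA => ?_, hsub⟩
    · exact (hsub A hA B hB).mp hAB.le |>.antisymm ((hsub B hB A hA).mp hAB.ge)
    · simp only [posetY, mem_insert, mem_singleton] at hA
      rcases hA with rfl | rfl | rfl | rfl <;> simp +decide [φ, *]

section Saturation

variable {n : ℕ} {F : Finset (Finset ℕ)} {S : Finset ℕ}

theorem isYConfig_of_containsInduced_insert (hF : ¬ ContainsInduced posetY F)
    (h : ContainsInduced posetY (insert S F)) :
    (∃ b ∈ F, ∃ c ∈ F, ∃ d ∈ F, IsYConfig S b c d) ∨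
    (∃ a ∈ F, ∃ b ∈ F, ∃ d ∈ F, IsYConfig a b S d) ∨
    (∃ a ∈ F, ∃ b ∈ F, ∃ c ∈ F, IsYConfig a b c S) := by
  obtain ⟨a, ha, b, hb, c, hc, d, hd, hY⟩ := (containsInduced_posetY_iff_s14 _).mp h
  have mem {x} (hx : x ∈ insert S F) (hxS : S ≠ x) : x ∈ F :=
    mem_of_mem_insert_of_ne hx hxS.symm
  rcases eq_or_ne a S with rfl | haS
  · exact .inl ⟨b, mem hb hY.left_ne_right, c, mem hc hY.left_ne_hip,
      d, mem hd hY.left_ne_top, hY⟩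
  rcases eq_or_ne b S with rfl | hbS
  · exact .inl ⟨a, mem ha hY.symm.left_ne_right, c, mem hc hY.symm.left_ne_hip,
      d, mem hd hY.symm.left_ne_top, hY.symm⟩
  rcases eq_or_ne c S with rfl | hcS
  · exact .inr (.inl ⟨a, mem ha hY.left_ne_hip.symm, b, mem hb hY.symm.left_ne_hip.symm,
      d, mem hd hY.hip_ne_top, hY⟩)
  rcases eq_or_ne d S with rfl | hdS
  · exact .inr (.inr ⟨a, mem ha hY.left_ne_top.symm, b, mem hb hY.symm.left_ne_top.symm,
      c, mem hc hY.hip_ne_top.symm, hY⟩)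
  exact absurd ((containsInduced_posetY_iff_s14 F).mpr ⟨a, mem ha haS.symm, b, mem hb hbS.symm,
    c, mem hc hcS.symm, d, mem hd hdS.symm, hY⟩) hF

theorem InducedSaturated.isYConfig_of_notMem (hF : InducedSaturated n posetY F)
    (hS : S ⊆ Icc 1 n) (hSF : S ∉ F) :
    (∃ b ∈ F, ∃ c ∈ F, ∃ d ∈ F, IsYConfig S b c d) ∨
    (∃ a ∈ F, ∃ b ∈ F, ∃ d ∈ F, IsYConfig a b S d) ∨
    (∃ a ∈ F, ∃ b ∈ F, ∃ c ∈ F, IsYConfig a b c S) :=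
  isYConfig_of_containsInduced_insert hF.2.1 (hF.2.2 S hS hSF)

theorem InducedSaturated.empty_mem (hF : InducedSaturated n posetY F) : ∅ ∈ F := by
  by_contra h
  rcases hF.isYConfig_of_notMem (empty_subset _) h with
    ⟨b, -, c, -, d, -, hY⟩ | ⟨a, -, b, -, d, -, hY⟩ | ⟨a, -, b, -, c, -, hY⟩
  · exact hY.left_not_subset (empty_subset b)
  · simpa using hY.one_lt_card_hip
  · exact not_ssubset_empty c hY.hip_ssubset_top

end Saturation

def nonmax (F : Finset (Finset ℕ)) : Finset (Finset ℕ) :=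
  F.filter fun c => ∃ d ∈ F, c ⊂ d

def treeAbove (F : Finset (Finset ℕ)) (x : Finset ℕ) : Finset (Finset ℕ) :=
  (nonmax F).filter (x ⊆ ·)

def treeSupport (F : Finset (Finset ℕ)) (x : Finset ℕ) : Finset ℕ :=
  (treeAbove F x).sup id

def treeChildren (F : Finset (Finset ℕ)) (x : Finset ℕ) : Finset (Finset ℕ) :=
  (treeAbove F x).filter fun w => x ⊂ w ∧ ∀ z ∈ F, z ⊂ w → z ⊆ x

section Tree

variable {F : Finset (Finset ℕ)} {a b c d w x y : Finset ℕ}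

theorem mem_nonmax : c ∈ nonmax F ↔ c ∈ F ∧ ∃ d ∈ F, c ⊂ d := mem_filter

theorem mem_treeAbove : y ∈ treeAbove F x ↔ y ∈ nonmax F ∧ x ⊆ y := mem_filter

theorem mem_treeSupport {u : ℕ} : u ∈ treeSupport F x ↔ ∃ y ∈ treeAbove F x, u ∈ y :=
  mem_sup

theorem mem_treeChildren :
    w ∈ treeChildren F x ↔ w ∈ treeAbove F x ∧ x ⊂ w ∧ ∀ z ∈ F, z ⊂ w → z ⊆ x :=
  mem_filter

theorem nonmax_subset : nonmax F ⊆ F := filter_subset _ _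

theorem ssubset_of_mem_treeChildren (hw : w ∈ treeChildren F x) : x ⊂ w :=
  (mem_treeChildren.mp hw).2.1

theorem mem_nonmax_of_mem_treeChildren (hw : w ∈ treeChildren F x) : w ∈ nonmax F :=
  (mem_treeAbove.mp (mem_treeChildren.mp hw).1).1

theorem comparable_of_subset_nonmax (hF : ¬ ContainsInduced posetY F) (hw : w ∈ nonmax F)
    (ha : a ∈ F) (hb : b ∈ F) (haw : a ⊆ w) (hbw : b ⊆ w) : a ⊆ b ∨ b ⊆ a := by
  obtain ⟨hwF, d, hd, hwd⟩ := mem_nonmax.mp hw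
  by_contra! h
  exact hF ((containsInduced_posetY_iff_s14 F).mpr
    ⟨a, ha, b, hb, w, hwF, d, hd, h.1, h.2, haw, hbw, hwd⟩)

theorem not_isYConfig_of_hip_subset_nonmax (hF : ¬ ContainsInduced posetY F)
    (hw : w ∈ nonmax F) (ha : a ∈ F) (hb : b ∈ F) (hcw : c ⊆ w) (hY : IsYConfig a b c d) :
    False := by
  rcases comparable_of_subset_nonmax hF hw ha hb (hY.left_subset_hip.trans hcw)
    (hY.right_subset_hip.trans hcw) with h | h
  · exact hY.left_not_subset h
  · exact hY.right_not_subset h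

theorem subset_of_mem_treeChildren (hF : ¬ ContainsInduced posetY F)
    (hw : w ∈ treeChildren F x) (hb : b ∈ F) (hbx : ¬ b ⊆ x) (hy : y ∈ nonmax F)
    (hwy : w ⊆ y) (hby : b ⊆ y) : w ⊆ b := by
  obtain ⟨-, -, hcover⟩ := mem_treeChildren.mp hw
  rcases comparable_of_subset_nonmax hF hy (nonmax_subset (mem_nonmax_of_mem_treeChildren hw))
    hb hwy hby with h | h
  · exact h
  · rcases h.eq_or_ssubset with rfl | hbw
    · exact subset_rfl
    · exact absurd (hcover b hb hbw) hbx

theorem exists_mem_treeChildren_subset (hF : ¬ ContainsInduced posetY F) (hx : x ∈ F)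
    (hy : y ∈ treeAbove F x) (hyx : y ≠ x) : ∃ w ∈ treeChildren F x, w ⊆ y := by
  obtain ⟨hyN, hxy⟩ := mem_treeAbove.mp hy
  obtain ⟨hyF, dy, hdy, hydy⟩ := mem_nonmax.mp hyN
  obtain ⟨w, hwy, ⟨hwF, hxw⟩, hmin⟩ := exists_minimal_le_of_wellFoundedLT
    (fun z => z ∈ F ∧ x ⊂ z) y ⟨hyF, hxy.ssubset_of_ne hyx.symm⟩
  have hwN : w ∈ nonmax F := mem_nonmax.mpr ⟨hwF, dy, hdy, lt_of_le_of_lt hwy hydy⟩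
  refine ⟨w, mem_treeChildren.mpr ⟨mem_treeAbove.mpr ⟨hwN, hxw.subset⟩, hxw, ?_⟩, hwy⟩
  intro z hz hzw
  rcases comparable_of_subset_nonmax hF hyN hz hx (hzw.subset.trans hwy) hxy with h | h
  · exact h
  · rcases h.eq_or_ssubset with rfl | hxz
    · exact subset_rfl
    · exact absurd (hmin ⟨hz, hxz⟩ hzw.le) hzw.not_subset

theorem treeAbove_ssubset_of_mem_treeChildren (hx : x ∈ nonmax F)
    (hw : w ∈ treeChildren F x) : treeAbove F w ⊂ treeAbove F x := by
  obtain ⟨-, hxw, -⟩ := mem_treeChildren.mp hw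
  refine ssubset_iff_of_subset (fun y hy => ?_) |>.mpr ⟨x, ?_, fun hx' => ?_⟩
  · obtain ⟨hyN, hwy⟩ := mem_treeAbove.mp hy
    exact mem_treeAbove.mpr ⟨hyN, hxw.subset.trans hwy⟩
  · exact mem_treeAbove.mpr ⟨hx, subset_rfl⟩
  · exact hxw.not_subset (mem_treeAbove.mp hx').2

theorem card_treeAbove (hF : ¬ ContainsInduced posetY F) (hx : x ∈ nonmax F) :
    (treeAbove F x).card = ∑ w ∈ treeChildren F x, (treeAbove F w).card + 1 := by
  have hxF := nonmax_subset hx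
  have hunion : (treeAbove F x).erase x = (treeChildren F x).biUnion (treeAbove F) := by
    ext y
    simp only [mem_erase, mem_biUnion]
    constructor
    · rintro ⟨hyx, hy⟩
      obtain ⟨w, hw, hwy⟩ := exists_mem_treeChildren_subset hF hxF hy hyx
      exact ⟨w, hw, mem_treeAbove.mpr ⟨(mem_treeAbove.mp hy).1, hwy⟩⟩
    · rintro ⟨w, hw, hy⟩
      refine ⟨?_, (treeAbove_ssubset_of_mem_treeChildren hx hw).subset hy⟩
      rintro rfl
      exact (ssubset_of_mem_treeChildren hw).not_subset (mem_treeAbove.mp hy).2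
  have hdisj : (treeChildren F x : Set (Finset ℕ)).PairwiseDisjoint (treeAbove F) := by
    intro w₁ hw₁ w₂ hw₂ hne
    refine disjoint_left.mpr fun y hy₁ hy₂ => hne ?_
    obtain ⟨hyN, hw₁y⟩ := mem_treeAbove.mp hy₁
    obtain ⟨-, hw₂y⟩ := mem_treeAbove.mp hy₂
    have hnot {w} (hw : w ∈ treeChildren F x) : ¬ w ⊆ x :=
      (ssubset_of_mem_treeChildren hw).not_subset
    have hF₁ := nonmax_subset (mem_nonmax_of_mem_treeChildren hw₁)
    have hF₂ := nonmax_subset (mem_nonmax_of_mem_treeChildren hw₂)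
    exact (subset_of_mem_treeChildren hF hw₁ hF₂ (hnot hw₂) hyN hw₁y hw₂y).antisymm
      (subset_of_mem_treeChildren hF hw₂ hF₁ (hnot hw₁) hyN hw₂y hw₁y)
  rw [← card_erase_add_one (mem_treeAbove.mpr ⟨hx, subset_rfl⟩), hunion,
    card_biUnion hdisj]

end Tree

section Count

variable {n : ℕ} {F : Finset (Finset ℕ)}

theorem InducedSaturated.exists_mem_treeChildren_mem_treeSupport_sdiff
    (hF : InducedSaturated n posetY F) {x w : Finset ℕ} (hx : x ∈ F)
    (hw : w ∈ treeChildren F x) {u : ℕ} (hu : u ∈ w \ x) (hgap : 1 < (w \ x).card) :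
    ∃ w' ∈ treeChildren F x, u ∈ treeSupport F w' \ w' := by
  have hfree := hF.2.1
  obtain ⟨-, hxw, hcover⟩ := mem_treeChildren.mp hw
  have hwN := mem_nonmax_of_mem_treeChildren hw
  obtain ⟨v, hv, hvu⟩ := exists_mem_ne hgap u
  rw [mem_sdiff] at hu hv
  have hSw : insert u x ⊂ w := by
    refine (ssubset_iff_of_subset (insert_subset hu.1 hxw.subset)).mpr ⟨v, hv.1, ?_⟩
    simp [hvu, hv.2]
  have hSF : insert u x ∉ F := fun h => hu.2 (hcover _ h hSw (mem_insert_self u x))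
  -- As hip or top, `insert u x` would have two incomparable members of `F` below the
  -- non-maximal `w`; so it is a leg.
  rcases hF.isYConfig_of_notMem (hSw.subset.trans (hF.1 w (nonmax_subset hwN))) hSF with
    ⟨b, hb, c, hc, d, hd, hY⟩ | ⟨a, ha, b, hb, d, -, hY⟩ | ⟨a, ha, b, hb, c, -, hY⟩
  · have hcN : c ∈ nonmax F := mem_nonmax.mpr ⟨hc, d, hd, hY.hip_ssubset_top⟩
    have hxc : x ⊆ c := (subset_insert u x).trans hY.left_subset_hip
    have huc : u ∈ c := hY.left_subset_hip (mem_insert_self u x)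
    have hbx : ¬ b ⊆ x := fun h => hY.right_not_subset (h.trans (subset_insert u x))
    have hxb : x ⊆ b :=
      (comparable_of_subset_nonmax hfree hcN hb hx hY.right_subset_hip hxc).resolve_left hbx
    have hub : u ∉ b := fun h => hY.left_not_subset (insert_subset h hxb)
    obtain ⟨w', hw', hw'c⟩ := exists_mem_treeChildren_subset hfree hx
      (mem_treeAbove.mpr ⟨hcN, hxc⟩) (fun h => hu.2 (h ▸ huc))
    have hw'b := subset_of_mem_treeChildren hfree hw' hb hbx hcN hw'c hY.right_subset_hip
    have hcw' : c ∈ treeAbove F w' := mem_treeAbove.mpr ⟨hcN, hw'c⟩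
    exact ⟨w', hw', mem_sdiff.mpr ⟨mem_treeSupport.mpr ⟨c, hcw', huc⟩, fun h => hub (hw'b h)⟩⟩
  · exact (not_isYConfig_of_hip_subset_nonmax hfree hwN ha hb hSw.subset hY).elim
  · exact (not_isYConfig_of_hip_subset_nonmax hfree hwN ha hb
      (hY.hip_ssubset_top.subset.trans hSw.subset) hY).elim

theorem InducedSaturated.treeSupport_sdiff_subset (hF : InducedSaturated n posetY F)
    {x : Finset ℕ} (hx : x ∈ F) :
    treeSupport F x \ x ⊆ (treeChildren F x).biUnion
      fun w => treeSupport F w \ w ∪ if (w \ x).card ≤ 1 then w \ x else ∅ := by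
  intro u hu
  obtain ⟨hu, hux⟩ := mem_sdiff.mp hu
  obtain ⟨y, hy, huy⟩ := mem_treeSupport.mp hu
  obtain ⟨w, hw, hwy⟩ := exists_mem_treeChildren_subset hF.2.1 hx hy (fun h => hux (h ▸ huy))
  have huw' : u ∈ treeSupport F w :=
    mem_treeSupport.mpr ⟨y, mem_treeAbove.mpr ⟨(mem_treeAbove.mp hy).1, hwy⟩, huy⟩
  simp only [mem_biUnion, mem_union, mem_sdiff]
  by_cases huw : u ∈ w
  · by_cases hgap : (w \ x).card ≤ 1
    · exact ⟨w, hw, .inr (by simp [hgap, huw, hux])⟩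
    · obtain ⟨w', hw', hu'⟩ := hF.exists_mem_treeChildren_mem_treeSupport_sdiff hx hw
        (mem_sdiff.mpr ⟨huw, hux⟩) (not_le.mp hgap)
      exact ⟨w', hw', .inl (mem_sdiff.mp hu')⟩
  · exact ⟨w, hw, .inl ⟨huw', huw⟩⟩

theorem InducedSaturated.card_treeSupport_sdiff_lt (hF : InducedSaturated n posetY F)
    {x : Finset ℕ} (hx : x ∈ nonmax F) : (treeSupport F x \ x).card < (treeAbove F x).card := by
  have hxF := nonmax_subset hx
  have ih : ∀ w ∈ treeChildren F x, (treeSupport F w \ w).card < (treeAbove F w).card :=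
    fun w hw => hF.card_treeSupport_sdiff_lt (mem_nonmax_of_mem_treeChildren hw)
  calc (treeSupport F x \ x).card
      ≤ ∑ w ∈ treeChildren F x,
          (treeSupport F w \ w ∪ if (w \ x).card ≤ 1 then w \ x else ∅).card :=
        (card_le_card (hF.treeSupport_sdiff_subset hxF)).trans card_biUnion_le
    _ ≤ ∑ w ∈ treeChildren F x, ((treeSupport F w \ w).card + 1) := by
        refine sum_le_sum fun w _ => (card_union_le _ _).trans ?_
        split_ifs with h
        · omega
        · simp
    _ ≤ ∑ w ∈ treeChildren F x, (treeAbove F w).card :=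
        sum_le_sum fun w hw => ih w hw
    _ < (treeAbove F x).card := by
        rw [card_treeAbove hF.2.1 hx]
        omega
termination_by (treeAbove F x).card
decreasing_by exact card_lt_card (treeAbove_ssubset_of_mem_treeChildren hx hw)

end Count

section LowerBound

variable {n : ℕ} {F : Finset (Finset ℕ)}

theorem InducedSaturated.exists_mem_nonmax_mem (hF : InducedSaturated n posetY F) (hn : 2 ≤ n)
    {i : ℕ} (hi : i ∈ Icc 1 n) : ∃ c ∈ nonmax F, i ∈ c := by
  by_contra! h
  by_cases hiF : {i} ∈ F
  · obtain ⟨j, hj, hji⟩ := exists_mem_ne (by rw [Nat.card_Icc]; omega : 1 < (Icc 1 n).card) i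
    have hij : {i} ⊂ ({i, j} : Finset ℕ) :=
      (ssubset_iff_of_subset (by simp)).mpr ⟨j, by simp, by simpa using hji⟩
    have hSF : {i, j} ∉ F := fun hS =>
      h {i} (mem_nonmax.mpr ⟨hiF, _, hS, hij⟩) (mem_singleton_self i)
    rcases hF.isYConfig_of_notMem (insert_subset hi (by simpa using hj)) hSF with
      ⟨b, -, c, hc, d, hd, hY⟩ | ⟨a, -, b, -, d, hd, hY⟩ | ⟨a, -, b, -, c, -, hY⟩
    · exact h c (mem_nonmax.mpr ⟨hc, d, hd, hY.hip_ssubset_top⟩)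
        (hY.left_subset_hip (mem_insert_self i _))
    · exact h {i} (mem_nonmax.mpr ⟨hiF, d, hd, hij.trans hY.hip_ssubset_top⟩)
        (mem_singleton_self i)
    · exact absurd hY.two_lt_card_top (not_lt.mpr card_le_two)
  · rcases hF.isYConfig_of_notMem (singleton_subset_iff.mpr hi) hiF with
      ⟨b, -, c, hc, d, hd, hY⟩ | ⟨a, -, b, -, d, -, hY⟩ | ⟨a, -, b, -, c, -, hY⟩
    · exact h c (mem_nonmax.mpr ⟨hc, d, hd, hY.hip_ssubset_top⟩)
        (hY.left_subset_hip (mem_singleton_self i))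
    · simpa using hY.one_lt_card_hip
    · simpa using hY.two_lt_card_top

theorem card_nonmax_lt_card (hF : F.Nonempty) : (nonmax F).card < F.card := by
  obtain ⟨m, hm⟩ := F.exists_maximal hF
  refine card_lt_card (filter_ssubset.mpr ⟨m, hm.1, ?_⟩)
  rintro ⟨d, hd, hmd⟩
  exact hmd.not_subset (hm.2 hd hmd.subset)

theorem InducedSaturated.add_two_le_card (hF : InducedSaturated n posetY F) (hn : 2 ≤ n) :
    n + 2 ≤ F.card := by
  obtain ⟨c, hc, h1c⟩ := hF.exists_mem_nonmax_mem hn (mem_Icc.mpr ⟨le_rfl, by omega⟩)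
  have hroot : ∅ ∈ nonmax F :=
    mem_nonmax.mpr ⟨hF.empty_mem, c, nonmax_subset hc, empty_ssubset.mpr ⟨1, h1c⟩⟩
  have habove : treeAbove F ∅ = nonmax F := filter_true_of_mem fun _ _ => empty_subset _
  have hsupport : Icc 1 n ⊆ treeSupport F ∅ := fun i hi => by
    obtain ⟨c, hc, hic⟩ := hF.exists_mem_nonmax_mem hn hi
    exact mem_treeSupport.mpr ⟨c, habove ▸ hc, hic⟩
  have hcount := hF.card_treeSupport_sdiff_lt hroot
  rw [sdiff_empty, habove] at hcount
  have hpoints := card_le_card hsupport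
  rw [Nat.card_Icc, Nat.add_sub_cancel] at hpoints
  have hmax := card_nonmax_lt_card ⟨∅, hF.empty_mem⟩
  omega

end LowerBound

def yWitness (n : ℕ) : Finset (Finset ℕ) :=
  insert (Icc 1 n) (insert ∅ ((Icc 1 n).image singleton))

section UpperBound

variable {n : ℕ}

theorem mem_yWitness {A : Finset ℕ} :
    A ∈ yWitness n ↔ A ⊆ Icc 1 n ∧ (A.card ≤ 1 ∨ A = Icc 1 n) := by
  simp only [yWitness, mem_insert, mem_image]
  constructor
  · rintro (rfl | rfl | ⟨i, hi, rfl⟩)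
    · exact ⟨subset_rfl, .inr rfl⟩
    · simp
    · simpa using hi
  · rintro ⟨hA, hA1 | rfl⟩
    · rcases A.eq_empty_or_nonempty with rfl | hne
      · exact .inr (.inl rfl)
      · obtain ⟨i, rfl⟩ := card_eq_one.mp (le_antisymm hA1 hne.card_pos)
        exact .inr (.inr ⟨i, singleton_subset_iff.mp hA, rfl⟩)
    · exact .inl rfl

theorem card_yWitness (hn : 2 ≤ n) : (yWitness n).card = n + 2 := by
  have hIcc : (Icc 1 n).card = n := by simp
  rw [yWitness, card_insert_of_notMem, card_insert_of_notMem,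
    card_image_of_injective _ singleton_injective, hIcc]
  · simp
  · intro h
    have hsmall : ∀ A ∈ insert ∅ ((Icc 1 n).image singleton), card A ≤ 1 := by
      simp only [mem_insert, mem_image]
      rintro A (rfl | ⟨i, -, rfl⟩) <;> simp
    have := hsmall _ h
    omega

theorem inducedSaturated_yWitness : InducedSaturated n posetY (yWitness n) := by
  refine ⟨fun A hA => (mem_yWitness.mp hA).1, ?_, fun S hS hSF => ?_⟩
  · rw [containsInduced_posetY_iff_s14]
    rintro ⟨a, -, b, -, c, hc, d, hd, hY⟩
    rcases (mem_yWitness.mp hc).2 with hc1 | rfl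
    · exact absurd hY.one_lt_card_hip (not_lt.mpr hc1)
    · exact hY.hip_ssubset_top.not_subset (mem_yWitness.mp hd).1
  · rw [mem_yWitness, not_and, not_or] at hSF
    obtain ⟨hS2, hSn⟩ := hSF hS
    obtain ⟨i, hi, j, hj, hij⟩ := one_lt_card.mp (not_le.mp hS2)
    rw [containsInduced_posetY_iff_s14]
    refine ⟨{i}, ?_, {j}, ?_, S, mem_insert_self _ _, Icc 1 n, ?_,
      ?_, ?_, ?_, ?_, hS.ssubset_of_ne hSn⟩
    · exact mem_insert_of_mem (mem_yWitness.mpr ⟨by simpa using hS hi, .inl (by simp)⟩)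
    · exact mem_insert_of_mem (mem_yWitness.mpr ⟨by simpa using hS hj, .inl (by simp)⟩)
    · exact mem_insert_of_mem (mem_yWitness.mpr ⟨subset_rfl, .inr rfl⟩)
    · simpa using hij
    · simpa using hij.symm
    · simpa using hi
    · simpa using hj

end UpperBound

/-- For `n ≥ 3`, `sat*(n, Y) = n + 2`. -/
theorem sat_star_y (n : ℕ) (hn : 3 ≤ n) : satStar n posetY = n + 2 := by
  have hmem : n + 2 ∈ {k | ∃ F, InducedSaturated n posetY F ∧ F.card = k} :=
    ⟨yWitness n, inducedSaturated_yWitness, card_yWitness (by omega)⟩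
  refine le_antisymm (Nat.sInf_le hmem) (le_csInf ⟨n + 2, hmem⟩ ?_)
  rintro k ⟨F, hF, rfl⟩
  exact hF.add_two_le_card (by omega)
end

section
/- Let P be a poset and suppose F₀ ⊆ 2^{[n₀]} is an induced P-saturated family such that for some i ∈ [n₀] there are no sets A, B ∈ F₀ with A \ B = {i}. Then for every n ≥ n₀ we have sat*(n, P) ≤ |F₀|. -/
/-!
Blow up the coordinate `i` into a new coordinate `m = n + 1`: send `A` to `A ∪ {m}` when `i ∈ A`
and to `A` otherwise. On sets avoiding `m` this is an order embedding, so the image of `F` is again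
induced `P`-free, has the same size, and no two of its members differ by exactly `{i}`.

For saturation, a new set `S ⊆ [n + 1]` must be mirrored by some `S' ⊆ [n]`, `S' ∉ F`, standing in
the same inclusion relations to `F` as `S` does to the image; a copy of `P` through `S'` then gives
one through `S`. If `m ∉ S`, the members of `F` below `S` that contain `i` have to be cut off:
either there are none and `S' = S`, or some `D ∋ i` lies below `S`, and then `S' = S \ {i}` works,
since a member `C ∌ i` above `S \ {i}` would give `D \ C = {i}`. The case `m ∈ S` is dual.
-/

open Finset

def NoSingletonDiff (F : Finset (Finset ℕ)) (i : ℕ) : Prop :=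
  ∀ A ∈ F, ∀ B ∈ F, A \ B ≠ {i}

theorem ContainsInduced.map {P F G : Finset (Finset ℕ)} {g : Finset ℕ → Finset ℕ}
    (hg : ∀ A ∈ F, g A ∈ G) (hg_subset : ∀ A ∈ F, ∀ B ∈ F, g A ⊆ g B ↔ A ⊆ B)
    (h : ContainsInduced P F) : ContainsInduced P G := by
  obtain ⟨φ, -, hφF, hφ⟩ := h
  refine ⟨g ∘ φ, fun A hA B hB hAB => ?_, fun A hA => hg _ (hφF A hA), fun A hA B hB => ?_⟩
  · have hsub : ∀ {A B}, A ∈ P → B ∈ P → g (φ A) = g (φ B) → A ⊆ B := fun hA hB h =>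
      (hφ _ hA _ hB).1 <| (hg_subset _ (hφF _ hA) _ (hφF _ hB)).1 h.subset
    exact (hsub hA hB hAB).antisymm (hsub hB hA hAB.symm)
  · exact (hg_subset _ (hφF A hA) _ (hφF B hB)).trans (hφ A hA B hB)

theorem ContainsInduced.insert_image {P F : Finset (Finset ℕ)} {f : Finset ℕ → Finset ℕ}
    {S S' : Finset ℕ} (hS' : S' ∉ F) (hf : ∀ A ∈ F, ∀ B ∈ F, f A ⊆ f B ↔ A ⊆ B)
    (hS : ∀ C ∈ F, (S ⊆ f C ↔ S' ⊆ C) ∧ (f C ⊆ S ↔ C ⊆ S'))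
    (h : ContainsInduced P (insert S' F)) : ContainsInduced P (insert S (F.image f)) := by
  have hupdate : ∀ C ∈ F, Function.update f S' S C = f C := fun C hC =>
    Function.update_of_ne (ne_of_mem_of_not_mem hC hS') _ _
  refine h.map (g := Function.update f S' S) ?_ ?_
  · rw [forall_mem_insert, Function.update_self]
    exact ⟨mem_insert_self _ _, fun C hC =>
      hupdate C hC ▸ mem_insert_of_mem (mem_image_of_mem f hC)⟩
  · simp +contextual [hupdate, hf, hS]

namespace NoSingletonDiff

variable {F : Finset (Finset ℕ)} {i : ℕ}

theorem not_erase_subset {A B : Finset ℕ} (h : NoSingletonDiff F i) (hA : A ∈ F) (hB : B ∈ F)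
    (hiA : i ∈ A) (hiB : i ∉ B) : ¬ A.erase i ⊆ B := fun hAB =>
  h A hA B hB (by grind)

theorem exists_lower_proxy (h : NoSingletonDiff F i) (S : Finset ℕ) :
    ∃ S' ⊆ S, ∀ C ∈ F, (S ⊆ C ↔ S' ⊆ C) ∧ (C ⊆ S ∧ i ∉ C ↔ C ⊆ S') := by
  by_cases hD : ∃ D ∈ F, i ∈ D ∧ D ⊆ S
  · obtain ⟨D, hD, hiD, hDS⟩ := hD
    refine ⟨S.erase i, erase_subset i S, fun C hC => ⟨⟨(erase_subset i S).trans, fun hSC => ?_⟩,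
      subset_erase.symm⟩⟩
    have hiC : i ∈ C := by
      by_contra hiC
      exact h.not_erase_subset hD hC hiD hiC ((erase_subset_erase i hDS).trans hSC)
    exact subset_insert_iff.2 hSC |>.trans (insert_subset hiC subset_rfl)
  · push Not at hD
    exact ⟨S, subset_rfl, fun C hC =>
      ⟨Iff.rfl, And.left, fun hCS => ⟨hCS, fun hiC => hD C hC hiC hCS⟩⟩⟩

theorem exists_upper_proxy (h : NoSingletonDiff F i) (T : Finset ℕ) :
    ∃ S' ⊆ insert i T, ∀ C ∈ F, (T ⊆ C ∧ i ∈ C ↔ S' ⊆ C) ∧ (C ⊆ T ↔ C ⊆ S') := by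
  by_cases hD : ∃ D ∈ F, T ⊆ D ∧ i ∉ D
  · obtain ⟨D, hD, hTD, hiD⟩ := hD
    refine ⟨insert i T, subset_rfl, fun C hC => ⟨by rw [insert_subset_iff, and_comm],
      fun hCT => hCT.trans (subset_insert i T), fun hCT => ?_⟩⟩
    have hiC : i ∉ C := fun hiC =>
      h.not_erase_subset hC hD hiC hiD ((subset_insert_iff.1 hCT).trans hTD)
    exact (subset_insert_iff_of_notMem hiC).1 hCT
  · push Not at hD
    exact ⟨T, subset_insert i T, fun C hC => ⟨⟨And.left, fun hTC => ⟨hTC, hD C hC hTC⟩⟩, Iff.rfl⟩⟩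

end NoSingletonDiff

def blowup (i m : ℕ) (A : Finset ℕ) : Finset ℕ := if i ∈ A then insert m A else A

section Blowup

variable {i m : ℕ} {A B C S : Finset ℕ}

theorem erase_blowup (hA : m ∉ A) : (blowup i m A).erase m = A := by
  unfold blowup; split_ifs <;> simp [hA]

theorem blowup_mono (hAB : A ⊆ B) : blowup i m A ⊆ blowup i m B := by
  unfold blowup; split_ifs <;> grind

theorem blowup_subset_blowup_iff (hA : m ∉ A) (hB : m ∉ B) :
    blowup i m A ⊆ blowup i m B ↔ A ⊆ B := by
  refine ⟨fun h => ?_, blowup_mono⟩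
  simpa only [erase_blowup hA, erase_blowup hB] using erase_subset_erase m h

theorem blowup_injOn : Set.InjOn (blowup i m) {A | m ∉ A} := fun A hA B hB h => by
  rw [← erase_blowup (i := i) hA, h, erase_blowup hB]

theorem blowup_sdiff_blowup_ne_singleton (him : i ≠ m) (hB : m ∉ B) :
    blowup i m A \ blowup i m B ≠ {i} := by
  intro h
  have hdiff (x : ℕ) : x ∈ blowup i m A \ blowup i m B ↔ x = i := by rw [h, mem_singleton]
  have hiA : i ∈ A ∧ i ∉ B := by
    have := (hdiff i).2 rfl
    unfold blowup at this; split_ifs at this <;> grind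
  exact him ((hdiff m).1 (by simp [blowup, hiA, hB])).symm

theorem subset_blowup_iff_of_notMem (hS : m ∉ S) : S ⊆ blowup i m C ↔ S ⊆ C := by
  unfold blowup; split_ifs
  exacts [subset_insert_iff_of_notMem hS, Iff.rfl]

theorem blowup_subset_iff_of_notMem (hS : m ∉ S) : blowup i m C ⊆ S ↔ C ⊆ S ∧ i ∉ C := by
  unfold blowup; split_ifs <;> grind

theorem subset_blowup_iff_of_mem (hS : m ∈ S) (hC : m ∉ C) :
    S ⊆ blowup i m C ↔ S.erase m ⊆ C ∧ i ∈ C := by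
  unfold blowup; split_ifs <;> grind

theorem blowup_subset_iff_of_mem (hS : m ∈ S) (hC : m ∉ C) :
    blowup i m C ⊆ S ↔ C ⊆ S.erase m := by
  unfold blowup; split_ifs <;> grind

end Blowup

theorem NoSingletonDiff.exists_mirror_blowup {F : Finset (Finset ℕ)} {i m : ℕ}
    (h : NoSingletonDiff F i) (hF : ∀ C ∈ F, m ∉ C) (S : Finset ℕ) :
    ∃ S' ⊆ insert i (S.erase m),
      ∀ C ∈ F, (S ⊆ blowup i m C ↔ S' ⊆ C) ∧ (blowup i m C ⊆ S ↔ C ⊆ S') := by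
  by_cases hmS : m ∈ S
  · obtain ⟨S', hS'S, hS'⟩ := h.exists_upper_proxy (S.erase m)
    refine ⟨S', hS'S, fun C hC => ?_⟩
    rw [subset_blowup_iff_of_mem hmS (hF C hC), blowup_subset_iff_of_mem hmS (hF C hC)]
    exact hS' C hC
  · obtain ⟨S', hS'S, hS'⟩ := h.exists_lower_proxy S
    refine ⟨S', hS'S.trans ?_, fun C hC => ?_⟩
    · rw [erase_eq_of_notMem hmS]; exact subset_insert i S
    · rw [subset_blowup_iff_of_notMem hmS, blowup_subset_iff_of_notMem hmS]
      exact hS' C hC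

theorem noSingletonDiff_image_blowup {F : Finset (Finset ℕ)} {i m : ℕ} (him : i ≠ m)
    (hF : ∀ C ∈ F, m ∉ C) : NoSingletonDiff (F.image (blowup i m)) i := by
  simp only [NoSingletonDiff, forall_mem_image]
  exact fun _ _ B hB => blowup_sdiff_blowup_ne_singleton him (hF B hB)

namespace InducedSaturated

variable {n i : ℕ} {P F : Finset (Finset ℕ)}

theorem succ_notMem (h : InducedSaturated n P F) : ∀ C ∈ F, n + 1 ∉ C := fun C hC hnC => by
  simpa using h.1 C hC hnC

theorem image_blowup (h : InducedSaturated n P F) (hi : i ∈ Icc 1 n) (hF : NoSingletonDiff F i) :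
    InducedSaturated (n + 1) P (F.image (blowup i (n + 1))) := by
  have hmF := h.succ_notMem
  obtain ⟨hFn, hfree, hsat⟩ := h
  have hemb (A) (hA : A ∈ F) (B) (hB : B ∈ F) :
      blowup i (n + 1) A ⊆ blowup i (n + 1) B ↔ A ⊆ B :=
    blowup_subset_blowup_iff (hmF A hA) (hmF B hB)
  refine ⟨?_, fun hG => hfree ?_, fun S hS hSG => ?_⟩
  · simp only [forall_mem_image]
    intro C hC
    unfold blowup; split_ifs
    · exact insert_subset (by simp) ((hFn C hC).trans (Icc_subset_Icc_right n.le_succ))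
    · exact (hFn C hC).trans (Icc_subset_Icc_right n.le_succ)
  · refine hG.map (g := fun A => A.erase (n + 1)) ?_ ?_ <;>
      simp +contextual only [forall_mem_image, erase_blowup (hmF _ _), hemb, implies_true]
  · obtain ⟨S', hS'S, hS'⟩ := hF.exists_mirror_blowup hmF S
    have hS'F : S' ∉ F := fun hS'F => hSG <| mem_image.2
      ⟨S', hS'F, ((hS' S' hS'F).2.2 subset_rfl).antisymm ((hS' S' hS'F).1.2 subset_rfl)⟩
    have hS'n : S' ⊆ Icc 1 n := hS'S.trans <| insert_subset hi fun x hx => by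
      have := hS (mem_of_mem_erase hx)
      simp only [mem_Icc, mem_erase] at this hx ⊢
      omega
    exact (hsat S' hS'n hS'F).insert_image hS'F hemb hS'

theorem card_image_blowup (h : InducedSaturated n P F) :
    (F.image (blowup i (n + 1))).card = F.card :=
  card_image_of_injOn (blowup_injOn.mono h.succ_notMem)

end InducedSaturated

/-- If `F₀ ⊆ 2^[n₀]` is induced `P`-saturated and for some `i ∈ [n₀]` no `A, B ∈ F₀`
satisfy `A \ B = {i}`, then `sat*(n, P) ≤ |F₀|` for every `n ≥ n₀`. -/
theorem blowup_lemma (P : Finset (Finset ℕ)) (n₀ : ℕ) (F₀ : Finset (Finset ℕ))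
    (hF₀ : InducedSaturated n₀ P F₀) (i : ℕ) (hi : i ∈ Finset.Icc 1 n₀)
    (hno : ¬ ∃ A ∈ F₀, ∃ B ∈ F₀, A \ B = {i}) :
    ∀ n, n₀ ≤ n → satStar n P ≤ F₀.card := by
  intro n hn
  obtain ⟨F, hF, hcard, -⟩ :
      ∃ F, InducedSaturated n P F ∧ F.card = F₀.card ∧ NoSingletonDiff F i := by
    induction n, hn using Nat.le_induction with
    | base => exact ⟨F₀, hF₀, rfl, by simpa [NoSingletonDiff] using hno⟩
    | succ n hn ih =>
      obtain ⟨F, hF, hcard, hFi⟩ := ih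
      have hin : i ∈ Icc 1 n := Icc_subset_Icc_right hn hi
      refine ⟨_, hF.image_blowup hin hFi, hF.card_image_blowup.trans hcard,
        noSingletonDiff_image_blowup ?_ hF.succ_notMem⟩
      simp only [mem_Icc] at hin; omega
  exact Nat.sInf_le ⟨F, hF, hcard⟩
end
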